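/- arXiv:1403.4387 — 8 statements merged into one kernel-verified Lean document; each statement's English description precedes it below -/
import Mathlib

section
/- Let Γ be a G-symmetric graph with a G-invariant vertex partition 𝓑 with quotient not edgeless. For B ∈ 𝓑, define the incidence structure 𝓓(B) with point set B, blocks the blocks B' ∈ 𝓑 adjacent to B, and x ∈ B incident with B' iff x has a neighbour in B'. Then 𝓓(B) is a 1-design with parameters (v, b, r, k) where v = |B|, b is the valency of the quotient graph, r = s/t and k = m/t (with s the valency of Γ, m the number of edges between adjacent blocks, and t the common nonzero number of neighbours of a vertex in an adjacent block), and v·r = b·k. -/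
open scoped Pointwise

def IsGSymmetric {V G : Type*} [Group G] [MulAction G V] (Γ : SimpleGraph V) : Prop :=
  (∀ (g : G) (x y : V), Γ.Adj x y → Γ.Adj (g • x) (g • y)) ∧
  (∀ x y : V, ∃ g : G, g • x = y) ∧
  (∀ x₁ y₁ x₂ y₂ : V, Γ.Adj x₁ y₁ → Γ.Adj x₂ y₂ → ∃ g : G, g • x₁ = x₂ ∧ g • y₁ = y₂)

def IsGPartition {V : Type*} (G : Type*) [Group G] [MulAction G V] (𝓑 : Set (Set V)) : Prop :=
  Setoid.IsPartition 𝓑 ∧ ∀ (g : G), ∀ B ∈ 𝓑, g • B ∈ 𝓑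

def BlockAdj {V : Type*} (Γ : SimpleGraph V) (B B' : Set V) : Prop :=
  B ≠ B' ∧ ∃ x ∈ B, ∃ y ∈ B', Γ.Adj x y


/-- the incidence structure `𝓓(B)` (points `B`, blocks the blocks adjacent to `B`,
incidence = having a neighbour there) is a `1`-design with parameters `(v, b, r, k)` where
`r = s/t`, `k = m/t`, and `v·r = b·k`. -/
theorem stmt2 {V G : Type*} [Fintype V] [Group G] [MulAction G V]
    (Γ : SimpleGraph V) (𝓑 : Set (Set V))
    (hsym : IsGSymmetric (G := G) Γ) (hpart : IsGPartition G 𝓑)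
    (hedge : ∃ B ∈ 𝓑, ∃ B' ∈ 𝓑, BlockAdj Γ B B')
    (s m t v b : ℕ) (ht1 : 1 ≤ t)
    (hs : ∀ x : V, (Γ.neighborSet x).ncard = s)
    (hm : ∀ B ∈ 𝓑, ∀ B' ∈ 𝓑, BlockAdj Γ B B' →
      {e : V × V | e.1 ∈ B ∧ e.2 ∈ B' ∧ Γ.Adj e.1 e.2}.ncard = m)
    (ht : ∀ B ∈ 𝓑, ∀ B' ∈ 𝓑, BlockAdj Γ B B' → ∀ x ∈ B,
      (Γ.neighborSet x ∩ B').ncard = 0 ∨ (Γ.neighborSet x ∩ B').ncard = t)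
    (hv : ∀ B ∈ 𝓑, B.ncard = v)
    (hb : ∀ B ∈ 𝓑, {B' ∈ 𝓑 | BlockAdj Γ B B'}.ncard = b) :
    t ∣ s ∧ t ∣ m ∧
    (∀ B ∈ 𝓑,
      (∀ x ∈ B, {B' | B' ∈ 𝓑 ∧ BlockAdj Γ B B' ∧ ∃ y ∈ B', Γ.Adj x y}.ncard = s / t) ∧
      (∀ B' ∈ 𝓑, BlockAdj Γ B B' → {x ∈ B | ∃ y ∈ B', Γ.Adj x y}.ncard = m / t)) ∧
    v * (s / t) = b * (m / t) := by
  classical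
  obtain ⟨hPart, hInv⟩ := hpart
  obtain ⟨B₀, hB₀, B₀', hB₀', hadj₀⟩ := hedge
  have ht0 : 0 < t := ht1
  -- uniqueness of blocks
  have huniq : ∀ (x : V) (B B' : Set V), B ∈ 𝓑 → x ∈ B → B' ∈ 𝓑 → x ∈ B' → B = B' := by
    intro x B B' hB hx hB' hx'
    exact ExistsUnique.unique (hPart.2 x) ⟨hB, hx⟩ ⟨hB', hx'⟩
  -- no edges inside a block
  have noIntra : ∀ B ∈ 𝓑, ∀ x ∈ B, ∀ y ∈ B, ¬ Γ.Adj x y := by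
    intro B hB x hx y hy hxy
    obtain ⟨hneq, x₀, hx₀, y₀, hy₀, hadj⟩ := hadj₀
    obtain ⟨g, hgx, hgy⟩ := hsym.2.2 x₀ y₀ x y hadj hxy
    have h1 : g • B₀ ∈ 𝓑 := hInv g B₀ hB₀
    have h2 : g • B₀' ∈ 𝓑 := hInv g B₀' hB₀'
    have hx' : x ∈ g • B₀ := hgx ▸ Set.smul_mem_smul_set hx₀
    have hy' : y ∈ g • B₀' := hgy ▸ Set.smul_mem_smul_set hy₀
    have e1 : g • B₀ = B := huniq x _ _ h1 hx' hB hx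
    have e2 : g • B₀' = B := huniq y _ _ h2 hy' hB hy
    exact hneq (smul_left_cancel g (e1.trans e2.symm))
  -- the block of a vertex
  set blk : V → Set V := fun x => (hPart.2 x).choose with hblkdef
  have hblk : ∀ x, blk x ∈ 𝓑 ∧ x ∈ blk x := fun x => (hPart.2 x).choose_spec.1
  have hblk_eq : ∀ {x : V} {B : Set V}, B ∈ 𝓑 → x ∈ B → blk x = B := by
    intro x B hB hx
    exact huniq x _ _ (hblk x).1 (hblk x).2 hB hx
  -- KEY 1 : the replication number
  have key1 : ∀ B ∈ 𝓑, ∀ x ∈ B,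
      {B' | B' ∈ 𝓑 ∧ BlockAdj Γ B B' ∧ ∃ y ∈ B', Γ.Adj x y}.ncard * t = s := by
    intro B hB x hx
    set Sx := {B' | B' ∈ 𝓑 ∧ BlockAdj Γ B B' ∧ ∃ y ∈ B', Γ.Adj x y} with hSxdef
    have hSfin : Sx.Finite := Set.toFinite _
    have hNfin : (Γ.neighborSet x).Finite := Set.toFinite _
    have hmap : ∀ y ∈ hNfin.toFinset, blk y ∈ hSfin.toFinset := by
      intro y hy
      rw [Set.Finite.mem_toFinset] at hy ⊢
      have hxy : Γ.Adj x y := hy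
      have hyB : y ∈ blk y := (hblk y).2
      have hne : B ≠ blk y := by
        intro h
        exact noIntra B hB x hx y (h ▸ hyB) hxy
      exact ⟨(hblk y).1, ⟨hne, x, hx, y, hyB, hxy⟩, y, hyB, hxy⟩
    have hsum := Finset.card_eq_sum_card_fiberwise hmap
    have hfib : ∀ B' ∈ hSfin.toFinset,
        (hNfin.toFinset.filter (fun y => blk y = B')).card = t := by
      intro B' hB'
      rw [Set.Finite.mem_toFinset] at hB'
      obtain ⟨hB'𝓑, hBAdj, y₀, hy₀, hady₀⟩ := hB'
      have hset : (hNfin.toFinset.filter (fun y => blk y = B')) =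
          (Set.toFinite (Γ.neighborSet x ∩ B')).toFinset := by
        ext y
        simp only [Finset.mem_filter, Set.Finite.mem_toFinset, Set.mem_inter_iff]
        constructor
        · rintro ⟨h1, h2⟩
          exact ⟨h1, h2 ▸ (hblk y).2⟩
        · rintro ⟨h1, h2⟩
          exact ⟨h1, hblk_eq hB'𝓑 h2⟩
      rw [hset, ← Set.ncard_eq_toFinset_card]
      rcases ht B hB B' hB'𝓑 hBAdj x hx with h0 | hT
      · exfalso
        rw [Set.ncard_eq_zero (Set.toFinite _)] at h0
        exact absurd h0 (Set.nonempty_iff_ne_empty.1 ⟨y₀, hady₀, hy₀⟩)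
      · exact hT
    rw [Finset.sum_congr rfl hfib, Finset.sum_const, smul_eq_mul] at hsum
    rw [Set.ncard_eq_toFinset_card _ hSfin, ← hsum, ← Set.ncard_eq_toFinset_card _ hNfin, hs x]
  -- KEY 2 : the block size
  have key2 : ∀ B ∈ 𝓑, ∀ B' ∈ 𝓑, BlockAdj Γ B B' →
      {x ∈ B | ∃ y ∈ B', Γ.Adj x y}.ncard * t = m := by
    intro B hB B' hB' hBA
    set E := {e : V × V | e.1 ∈ B ∧ e.2 ∈ B' ∧ Γ.Adj e.1 e.2} with hEdef
    set K := {x ∈ B | ∃ y ∈ B', Γ.Adj x y} with hKdef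
    have hEfin : E.Finite := Set.toFinite _
    have hKfin : K.Finite := Set.toFinite _
    have hmap : ∀ e ∈ hEfin.toFinset, e.1 ∈ hKfin.toFinset := by
      intro e he
      rw [Set.Finite.mem_toFinset] at he ⊢
      exact ⟨he.1, e.2, he.2.1, he.2.2⟩
    have hsum := Finset.card_eq_sum_card_fiberwise hmap
    have hfib : ∀ x ∈ hKfin.toFinset,
        (hEfin.toFinset.filter (fun e => e.1 = x)).card = t := by
      intro x hxK
      rw [Set.Finite.mem_toFinset] at hxK
      obtain ⟨hxB, y₀, hy₀, hady₀⟩ := hxK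
      have hcard : (hEfin.toFinset.filter (fun e => e.1 = x)).card =
          ((Set.toFinite (Γ.neighborSet x ∩ B')).toFinset).card := by
        apply Finset.card_bij (fun e _ => e.2)
        · intro e he
          simp only [Finset.mem_filter, Set.Finite.mem_toFinset] at he
          rw [Set.Finite.mem_toFinset]
          exact ⟨he.2 ▸ he.1.2.2, he.1.2.1⟩
        · intro e₁ h₁ e₂ h₂ hsnd
          simp only [Finset.mem_filter] at h₁ h₂
          exact Prod.ext (h₁.2.trans h₂.2.symm) hsnd
        · intro y hy
          rw [Set.Finite.mem_toFinset] at hy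
          refine ⟨(x, y), ?_, rfl⟩
          simp only [Finset.mem_filter, Set.Finite.mem_toFinset]
          exact ⟨⟨hxB, hy.2, hy.1⟩, trivial⟩
      rw [hcard, ← Set.ncard_eq_toFinset_card]
      rcases ht B hB B' hB' hBA x hxB with h0 | hT
      · exfalso
        rw [Set.ncard_eq_zero (Set.toFinite _)] at h0
        exact absurd h0 (Set.nonempty_iff_ne_empty.1 ⟨y₀, hady₀, hy₀⟩)
      · exact hT
    rw [Finset.sum_congr rfl hfib, Finset.sum_const, smul_eq_mul] at hsum
    rw [Set.ncard_eq_toFinset_card _ hKfin, ← hsum, ← Set.ncard_eq_toFinset_card _ hEfin,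
      hm B hB B' hB' hBA]
  -- divisibility
  obtain ⟨hneq₀, x₀, hx₀, y₀, hy₀, hadj⟩ := hadj₀
  have hts : t ∣ s := Dvd.intro_left _ (key1 B₀ hB₀ x₀ hx₀)
  have htm : t ∣ m := Dvd.intro_left _ (key2 B₀ hB₀ B₀' hB₀' ⟨hneq₀, x₀, hx₀, y₀, hy₀, hadj⟩)
  -- the two design equalities
  have hr : ∀ B ∈ 𝓑, ∀ x ∈ B,
      {B' | B' ∈ 𝓑 ∧ BlockAdj Γ B B' ∧ ∃ y ∈ B', Γ.Adj x y}.ncard = s / t := by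
    intro B hB x hx
    rw [← key1 B hB x hx, Nat.mul_div_cancel _ ht0]
  have hk : ∀ B ∈ 𝓑, ∀ B' ∈ 𝓑, BlockAdj Γ B B' →
      {x ∈ B | ∃ y ∈ B', Γ.Adj x y}.ncard = m / t := by
    intro B hB B' hB' hBA
    rw [← key2 B hB B' hB' hBA, Nat.mul_div_cancel _ ht0]
  refine ⟨hts, htm, fun B hB => ⟨hr B hB, hk B hB⟩, ?_⟩
  -- double counting for v·r = b·k over the block B₀
  set I := {p : V × Set V | p.1 ∈ B₀ ∧ p.2 ∈ 𝓑 ∧ BlockAdj Γ B₀ p.2 ∧ ∃ y ∈ p.2, Γ.Adj p.1 y}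
    with hIdef
  have hIfin : I.Finite := Set.toFinite _
  have hBfin : B₀.Finite := Set.toFinite _
  have hAfin : {B' ∈ 𝓑 | BlockAdj Γ B₀ B'}.Finite := Set.toFinite _
  have h1 : hIfin.toFinset.card = v * (s / t) := by
    have hmap : ∀ p ∈ hIfin.toFinset, p.1 ∈ hBfin.toFinset := by
      intro p hp
      rw [Set.Finite.mem_toFinset] at hp ⊢
      exact hp.1
    rw [Finset.card_eq_sum_card_fiberwise hmap]
    have hfib : ∀ x ∈ hBfin.toFinset,
        (hIfin.toFinset.filter (fun p => p.1 = x)).card = s / t := by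
      intro x hxB
      rw [Set.Finite.mem_toFinset] at hxB
      have hcard : (hIfin.toFinset.filter (fun p => p.1 = x)).card =
          ((Set.toFinite {B' | B' ∈ 𝓑 ∧ BlockAdj Γ B₀ B' ∧ ∃ y ∈ B', Γ.Adj x y}).toFinset).card := by
        apply Finset.card_bij (fun p _ => p.2)
        · intro p hp
          simp only [Finset.mem_filter, Set.Finite.mem_toFinset] at hp
          rw [Set.Finite.mem_toFinset]
          obtain ⟨⟨_, h2, h3, y, hy, hady⟩, hfst⟩ := hp
          exact ⟨h2, h3, y, hy, hfst ▸ hady⟩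
        · intro p₁ h₁ p₂ h₂ hsnd
          simp only [Finset.mem_filter] at h₁ h₂
          exact Prod.ext (h₁.2.trans h₂.2.symm) hsnd
        · intro B' hB'
          rw [Set.Finite.mem_toFinset] at hB'
          refine ⟨(x, B'), ?_, rfl⟩
          simp only [Finset.mem_filter, Set.Finite.mem_toFinset]
          exact ⟨⟨hxB, hB'.1, hB'.2.1, hB'.2.2⟩, trivial⟩
      rw [hcard, ← Set.ncard_eq_toFinset_card]
      exact hr B₀ hB₀ x hxB
    rw [Finset.sum_congr rfl hfib, Finset.sum_const, smul_eq_mul,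
      ← Set.ncard_eq_toFinset_card _ hBfin, hv B₀ hB₀]
  have h2 : hIfin.toFinset.card = b * (m / t) := by
    have hmap : ∀ p ∈ hIfin.toFinset, p.2 ∈ hAfin.toFinset := by
      intro p hp
      rw [Set.Finite.mem_toFinset] at hp ⊢
      exact ⟨hp.2.1, hp.2.2.1⟩
    rw [Finset.card_eq_sum_card_fiberwise hmap]
    have hfib : ∀ B' ∈ hAfin.toFinset,
        (hIfin.toFinset.filter (fun p => p.2 = B')).card = m / t := by
      intro B' hB'
      rw [Set.Finite.mem_toFinset] at hB'
      obtain ⟨hB'𝓑, hBA⟩ := hB'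
      have hcard : (hIfin.toFinset.filter (fun p => p.2 = B')).card =
          ((Set.toFinite {x ∈ B₀ | ∃ y ∈ B', Γ.Adj x y}).toFinset).card := by
        apply Finset.card_bij (fun p _ => p.1)
        · intro p hp
          simp only [Finset.mem_filter, Set.Finite.mem_toFinset] at hp
          rw [Set.Finite.mem_toFinset]
          obtain ⟨⟨h1', h2', h3', y, hy, hady⟩, hsnd⟩ := hp
          exact ⟨h1', y, hsnd ▸ hy, hady⟩
        · intro p₁ h₁ p₂ h₂ hfst
          simp only [Finset.mem_filter] at h₁ h₂
          exact Prod.ext hfst (h₁.2.trans h₂.2.symm)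
        · intro x hx
          rw [Set.Finite.mem_toFinset] at hx
          refine ⟨(x, B'), ?_, rfl⟩
          simp only [Finset.mem_filter, Set.Finite.mem_toFinset]
          exact ⟨⟨hx.1, hB'𝓑, hBA, hx.2⟩, trivial⟩
      rw [hcard, ← Set.ncard_eq_toFinset_card]
      exact hk B₀ hB₀ B' hB'𝓑 hBA
    rw [Finset.sum_congr rfl hfib, Finset.sum_const, smul_eq_mul,
      ← Set.ncard_eq_toFinset_card _ hAfin, hb B₀ hB₀]
  rw [← h1, ← h2]
end

section
/- Let Γ be a G-symmetric graph with G-invariant vertex partition 𝓑, quotient not edgeless, and B ∈ 𝓑. Then the setwise stabilizer G(B) acts as a group of automorphisms of the 1-design 𝓓(B), transitively on its points, transitively on its blocks, and transitively on its flags (incident point-block pairs). -/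
open scoped Pointwise

lemma part_unique {V : Type*} {𝓑 : Set (Set V)} (hp : Setoid.IsPartition 𝓑)
    {B₁ B₂ : Set V} (h₁ : B₁ ∈ 𝓑) (h₂ : B₂ ∈ 𝓑) {x : V} (hx₁ : x ∈ B₁) (hx₂ : x ∈ B₂) :
    B₁ = B₂ := by
  obtain ⟨b, -, hb⟩ := hp.2 x
  rw [hb B₁ ⟨h₁, hx₁⟩, hb B₂ ⟨h₂, hx₂⟩]

/-- the setwise stabilizer `G(B)` acts as automorphisms of the design `𝓓(B)`,
transitively on points, on blocks, and on flags. -/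
theorem stmt3 {V G : Type*} [Fintype V] [Group G] [MulAction G V]
    (Γ : SimpleGraph V) (𝓑 : Set (Set V))
    (hsym : IsGSymmetric (G := G) Γ) (hpart : IsGPartition G 𝓑)
    (hedge : ∃ B ∈ 𝓑, ∃ B' ∈ 𝓑, BlockAdj Γ B B') :
    ∀ B ∈ 𝓑,
      -- G(B) acts as automorphisms of 𝓓(B): it permutes the blocks of 𝓓(B) preserving incidence
      (∀ g : G, g • B = B → ∀ B' ∈ 𝓑, BlockAdj Γ B B' →
        (g • B' ∈ 𝓑 ∧ BlockAdj Γ B (g • B') ∧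
          ∀ x ∈ B, ((∃ y ∈ B', Γ.Adj x y) ↔ ∃ y ∈ g • B', Γ.Adj (g • x) y))) ∧
      -- transitive on points of 𝓓(B)
      (∀ x ∈ B, ∀ y ∈ B, ∃ g : G, g • B = B ∧ g • x = y) ∧
      -- transitive on blocks of 𝓓(B)
      (∀ B₁ ∈ 𝓑, ∀ B₂ ∈ 𝓑, BlockAdj Γ B B₁ → BlockAdj Γ B B₂ →
        ∃ g : G, g • B = B ∧ g • B₁ = B₂) ∧
      -- transitive on flags of 𝓓(B)
      (∀ x₁ ∈ B, ∀ x₂ ∈ B, ∀ B₁ ∈ 𝓑, ∀ B₂ ∈ 𝓑,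
        BlockAdj Γ B B₁ → BlockAdj Γ B B₂ →
        (∃ y ∈ B₁, Γ.Adj x₁ y) → (∃ y ∈ B₂, Γ.Adj x₂ y) →
        ∃ g : G, g • B = B ∧ g • x₁ = x₂ ∧ g • B₁ = B₂) := by
  obtain ⟨hadj, htrans, harc⟩ := hsym
  obtain ⟨hp, hinv⟩ := hpart
  -- every vertex has a neighbour
  have hnbr : ∀ v : V, ∃ w : V, Γ.Adj v w := by
    obtain ⟨B₀, -, B₀', -, -, u, -, w, -, huw⟩ := hedge
    intro v
    obtain ⟨g, hg⟩ := htrans u v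
    exact ⟨g • w, hg ▸ hadj g u w huw⟩
  -- a key step: if g • x = y with x ∈ B, y ∈ B, then g • B = B
  intro B hB
  have key : ∀ (g : G) (x : V), x ∈ B → g • x ∈ B → g • B = B := by
    intro g x hx hgx
    exact part_unique hp (hinv g B hB) hB ⟨x, hx, rfl⟩ hgx
  refine ⟨?_, ?_, ?_, ?_⟩
  · intro g hgB B' hB' hBB'
    refine ⟨hinv g B' hB', ⟨?_, ?_⟩, ?_⟩
    · intro h
      apply hBB'.1
      have hgg : g • B' = g • B := by rw [hgB, ← h]
      exact (smul_left_cancel g hgg).symm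
    · obtain ⟨x, hx, y, hy, hxy⟩ := hBB'.2
      exact ⟨g • x, hgB ▸ ⟨x, hx, rfl⟩, g • y, ⟨y, hy, rfl⟩, hadj g x y hxy⟩
    · intro x hx
      constructor
      · rintro ⟨y, hy, hxy⟩
        exact ⟨g • y, ⟨y, hy, rfl⟩, hadj g x y hxy⟩
      · rintro ⟨y, ⟨z, hz, rfl⟩, hxy⟩
        have := hadj g⁻¹ _ _ hxy
        simp only [inv_smul_smul] at this
        exact ⟨z, hz, this⟩
  · intro x hx y hy
    obtain ⟨x', hxx'⟩ := hnbr x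
    obtain ⟨y', hyy'⟩ := hnbr y
    obtain ⟨g, hg1, -⟩ := harc x x' y y' hxx' hyy'
    exact ⟨g, key g x hx (hg1 ▸ hy), hg1⟩
  · intro B₁ hB₁ B₂ hB₂ h1 h2
    obtain ⟨x₁, hx₁, y₁, hy₁, hxy₁⟩ := h1.2
    obtain ⟨x₂, hx₂, y₂, hy₂, hxy₂⟩ := h2.2
    obtain ⟨g, hg1, hg2⟩ := harc x₁ y₁ x₂ y₂ hxy₁ hxy₂
    refine ⟨g, key g x₁ hx₁ (hg1 ▸ hx₂), ?_⟩
    exact part_unique hp (hinv g B₁ hB₁) hB₂ ⟨y₁, hy₁, hg2⟩ hy₂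
  · intro x₁ hx₁ x₂ hx₂ B₁ hB₁ B₂ hB₂ h1 h2 ⟨y₁, hy₁, hxy₁⟩ ⟨y₂, hy₂, hxy₂⟩
    obtain ⟨g, hg1, hg2⟩ := harc x₁ y₁ x₂ y₂ hxy₁ hxy₂
    refine ⟨g, key g x₁ hx₁ (hg1 ▸ hx₂), hg1, ?_⟩
    exact part_unique hp (hinv g B₁ hB₁) hB₂ ⟨y₁, hy₁, hg2⟩ hy₂
end

section
/- Let Γ be a G-symmetric graph with G-invariant vertex partition 𝓑 whose quotient graph is the complete graph K_{b+1}, and suppose G(B)^B is 2-transitive for B ∈ 𝓑, with |B| = v. Then one of the following holds: (a) v < b; (b) v = b and the design 𝓓(B) has λ = 0, so t = k = m = r = 1 and Γ is a perfect matching consisting of (v+1 choose 2) disjoint edges; (c) v = k and 𝓓(B) has a single block of size v repeated b = r times; (d) v = b, 2 ≤ k < v, and 𝓓(B) is a symmetric 2-design with no repeated blocks. -/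
open scoped Pointwise

/-!
For `B ∈ 𝓑` the design `𝓓(B)` has `v` points, `b` blocks, replication number `r`, block size `k`,
and any two points lie on `λ` common blocks; double counting gives `v r = b k`. If `k = v`, every
point of `B` has a neighbour in every other part. Otherwise `λ < r`, and Fisher's argument applies:
the Gram matrix `N Nᵀ = (r - λ) I + λ J` of the incidence matrix is positive definite, so
`v ≤ rank N ≤ b`, and if `v = b` the columns of `N` are independent, hence the blocks are distinct.
Finally `λ = 0` forces `k = 1`, hence `t = 1` and `b = v r`; if moreover `r = 1`, then `Γ` is
`1`-regular on `(v + 1) v` vertices. If `λ > 0`, two points share a block, so `k ≥ 2`.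
-/

open Matrix

section IncidenceStructure

variable {ι κ : Type*} {P : ι → κ → Prop} {r k lam : ℕ}

theorem card_mul_eq_card_mul_of_regular [Finite ι] [Finite κ]
    (hr : ∀ i, {j | P i j}.ncard = r) (hk : ∀ j, {i | P i j}.ncard = k) :
    Nat.card ι * r = Nat.card κ * k := by
  classical
  have := Fintype.ofFinite ι
  have := Fintype.ofFinite κ
  have := Finset.card_mul_eq_card_mul P (s := Finset.univ) (t := Finset.univ) (m := r) (n := k)
    (fun i _ => by simpa [Finset.bipartiteAbove, Set.ncard_eq_toFinset_card'] using hr i)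
    (fun j _ => by simpa [Finset.bipartiteBelow, Set.ncard_eq_toFinset_card'] using hk j)
  simpa [Nat.card_eq_fintype_card] using this

/-- Blocks are indexed by `κ`, so a block may be repeated. -/
structure IsBalancedDesign (P : ι → κ → Prop) (r k lam : ℕ) : Prop where
  rep : ∀ i, {j | P i j}.ncard = r
  blockSize : ∀ j, {i | P i j}.ncard = k
  pair : ∀ i i', i ≠ i' → {j | P i j ∧ P i' j}.ncard = lam

open Classical in
noncomputable def incidenceMatrix (P : ι → κ → Prop) : Matrix ι κ ℝ :=
  Matrix.of fun i j => if P i j then 1 else 0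

theorem incidenceMatrix_mul_transpose_apply [Fintype κ] (i i' : ι) :
    (incidenceMatrix P * (incidenceMatrix P)ᵀ) i i' = {j | P i j ∧ P i' j}.ncard := by
  classical
  simp only [mul_apply, transpose_apply, incidenceMatrix, of_apply, ite_zero_mul_ite_zero, mul_one]
  simp [Finset.sum_boole, Set.ncard_eq_toFinset_card']

theorem incidenceMatrix_mul_transpose [Fintype κ] [DecidableEq ι]
    (hr : ∀ i, {j | P i j}.ncard = r) (hlam : ∀ i i', i ≠ i' → {j | P i j ∧ P i' j}.ncard = lam) :
    incidenceMatrix P * (incidenceMatrix P)ᵀ =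
      ((r : ℝ) - lam) • (1 : Matrix ι ι ℝ) + (lam : ℝ) • vecMulVec 1 1 := by
  ext i i'
  rw [incidenceMatrix_mul_transpose_apply]
  rcases eq_or_ne i i' with rfl | hne
  · simp [hr]
  · simp [hne, hlam i i' hne]

theorem Matrix.posDef_smul_one_add_smul_vecMulVec_one [Fintype ι] [DecidableEq ι] {a c : ℝ}
    (ha : 0 < a) (hc : 0 ≤ c) : (a • (1 : Matrix ι ι ℝ) + c • vecMulVec 1 1).PosDef := by
  refine (PosDef.one.smul ha).add_posSemidef (PosSemidef.smul ?_ hc)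
  simpa using posSemidef_vecMulVec_self_star (1 : ι → ℝ)

namespace IsBalancedDesign

theorem incident_of_blockSize_eq_card [Finite ι] (hP : IsBalancedDesign P r k lam)
    (hk : k = Nat.card ι) (i : ι) (j : κ) : P i j := by
  exact Set.eq_univ_iff_forall.1 ((Set.eq_univ_iff_ncard _).2 (hk ▸ hP.blockSize j)) i

theorem rep_eq_card_of_blockSize_eq_card [Finite ι] [Finite κ] (hP : IsBalancedDesign P r k lam)
    (hk : k = Nat.card ι) (i : ι) : r = Nat.card κ := by
  rw [← hP.rep i, ← Set.ncard_univ]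
  congr
  exact Set.eq_univ_of_forall (hP.incident_of_blockSize_eq_card hk i)

theorem lam_lt_rep [Finite κ] (hP : IsBalancedDesign P r k lam) {i i' : ι} {j : κ}
    (hi : P i j) (hi' : ¬ P i' j) : lam < r := by
  have hne : i ≠ i' := by rintro rfl; exact hi' hi
  rw [← hP.rep i, ← hP.pair i i' hne]
  exact Set.ncard_lt_ncard ⟨fun j hj => hj.1, fun h => hi' (h hi).2⟩

theorem lam_lt_rep_of_blockSize_lt [Finite ι] [Finite κ] [Nonempty κ]
    (hP : IsBalancedDesign P r k lam) (hk0 : 0 < k) (hkv : k < Nat.card ι) : lam < r := by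
  obtain ⟨j⟩ := ‹Nonempty κ›
  obtain ⟨i, hi⟩ := Set.nonempty_of_ncard_ne_zero ((hP.blockSize j).trans_ne hk0.ne')
  obtain ⟨i', hi'⟩ : ∃ i', ¬ P i' j := by
    by_contra! h
    exact hkv.ne (hP.blockSize j ▸ (Set.eq_univ_iff_ncard _).1 (Set.eq_univ_of_forall h))
  exact hP.lam_lt_rep hi hi'

theorem lam_pos_iff [Finite ι] [Finite κ] [Nontrivial ι] [Nonempty κ]
    (hP : IsBalancedDesign P r k lam) : 0 < lam ↔ 2 ≤ k := by
  constructor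
  · intro hlam
    obtain ⟨i, i', hne⟩ := exists_pair_ne ι
    obtain ⟨j, hij, hi'j⟩ := Set.nonempty_of_ncard_ne_zero ((hP.pair i i' hne).trans_ne hlam.ne')
    rw [← hP.blockSize j, ← Set.ncard_pair hne]
    exact Set.ncard_le_ncard (Set.insert_subset hij (Set.singleton_subset_iff.2 hi'j))
  · intro hk
    obtain ⟨j⟩ := ‹Nonempty κ›
    obtain ⟨i, i', hi, hi', hne⟩ := (Set.one_lt_ncard_iff).1 (hP.blockSize j ▸ hk)
    rw [← hP.pair i i' hne]
    exact (Set.ncard_pos).2 ⟨j, hi, hi'⟩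

theorem card_le_rank_incidenceMatrix [Fintype ι] [Fintype κ] (hP : IsBalancedDesign P r k lam)
    (hlt : lam < r) : Fintype.card ι ≤ (incidenceMatrix P).rank := by
  classical
  calc Fintype.card ι = (incidenceMatrix P * (incidenceMatrix P)ᵀ).rank := by
        rw [incidenceMatrix_mul_transpose hP.rep hP.pair, rank_of_isUnit _
          (posDef_smul_one_add_smul_vecMulVec_one (sub_pos.2 (by exact_mod_cast hlt))
            (Nat.cast_nonneg lam)).isUnit]
    _ ≤ (incidenceMatrix P).rank := rank_mul_le_left _ _

theorem card_le_card [Finite ι] [Finite κ] (hP : IsBalancedDesign P r k lam) (hlt : lam < r) :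
    Nat.card ι ≤ Nat.card κ := by
  have := Fintype.ofFinite ι
  have := Fintype.ofFinite κ
  simpa only [Nat.card_eq_fintype_card] using
    (hP.card_le_rank_incidenceMatrix hlt).trans (rank_le_card_width _)

theorem injective_of_card_eq [Finite ι] [Finite κ] (hP : IsBalancedDesign P r k lam)
    (hlt : lam < r) (hcard : Nat.card ι = Nat.card κ) : Function.Injective fun j => {i | P i j} := by
  classical
  have := Fintype.ofFinite ι
  have := Fintype.ofFinite κ
  simp only [Nat.card_eq_fintype_card] at hcard
  have hrank : Fintype.card κ = (incidenceMatrix P).rank :=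
    le_antisymm (hcard ▸ hP.card_le_rank_incidenceMatrix hlt) (rank_le_card_width _)
  have hcols : LinearIndependent ℝ (incidenceMatrix P).col := by
    rw [linearIndependent_iff_card_eq_finrank_span, hrank, rank_eq_finrank_span_cols]
    rfl
  intro j j' hjj'
  refine hcols.injective (funext fun i => ?_)
  simp only [col, transpose_apply, incidenceMatrix, of_apply]
  exact if_congr (Set.ext_iff.1 hjj' i) rfl rfl

end IsBalancedDesign

end IncidenceStructure

theorem Set.ncard_setOf_coe {α : Type*} (S : Set α) (Q : α → Prop) :
    {a : S | Q a}.ncard = {a ∈ S | Q a}.ncard := by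
  rw [← Set.ncard_image_of_injective _ Subtype.val_injective]
  congr
  ext a
  simp [and_comm]

theorem Set.ncard_setOf_coe_diff_singleton {α : Type*} (S : Set α) (a : α) (Q : α → Prop) :
    {c : ↥(S \ {a}) | Q c}.ncard = {c | c ∈ S ∧ c ≠ a ∧ Q c}.ncard := by
  rw [Set.ncard_setOf_coe]
  congr 1
  ext c
  simp [and_assoc]

theorem Setoid.IsPartition.card_eq_ncard_mul {α : Type*} [Finite α] {𝓑 : Set (Set α)}
    (h𝓑 : Setoid.IsPartition 𝓑) {v : ℕ} (hv : ∀ B ∈ 𝓑, B.ncard = v) :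
    Nat.card α = 𝓑.ncard * v := by
  have : Finite 𝓑 := Subtype.finite
  have hrep (x : α) : {B : 𝓑 | x ∈ (B : Set α)}.ncard = 1 := by
    obtain ⟨B, ⟨hB, hxB⟩, huniq⟩ := h𝓑.2 x
    rw [Set.ncard_eq_one]
    exact ⟨⟨B, hB⟩, Set.ext fun C => ⟨fun hxC => Subtype.ext (huniq C ⟨C.2, hxC⟩),
      fun hC => hC ▸ hxB⟩⟩
  simpa using card_mul_eq_card_mul_of_regular hrep fun B : 𝓑 => hv B B.2

theorem SimpleGraph.two_mul_ncard_edgeSet {V : Type*} [Finite V] {Γ : SimpleGraph V} {d : ℕ}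
    (hd : ∀ x, (Γ.neighborSet x).ncard = d) : 2 * Γ.edgeSet.ncard = Nat.card V * d := by
  classical
  have := Fintype.ofFinite V
  rw [← Γ.coe_edgeFinset, Set.ncard_coe_finset, ← Γ.sum_degrees_eq_twice_card_edges]
  have hdeg (x : V) : Γ.degree x = d := by
    rw [← Γ.card_neighborSet_eq_degree, ← Nat.card_eq_fintype_card, Nat.card_coe_set_eq, hd]
  simp [hdeg]

theorem SimpleGraph.ncard_edgeSet_eq_choose_two {V : Type*} [Finite V] {Γ : SimpleGraph V}
    {𝓑 : Set (Set V)} {v : ℕ} (h𝓑 : Setoid.IsPartition 𝓑) (hcard : 𝓑.ncard = v + 1)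
    (hv : ∀ B ∈ 𝓑, B.ncard = v) (hdeg : ∀ x, (Γ.neighborSet x).ncard = 1) :
    Γ.edgeSet.ncard = (v + 1).choose 2 := by
  have h := Γ.two_mul_ncard_edgeSet hdeg
  rw [h𝓑.card_eq_ncard_mul hv, hcard, mul_one] at h
  rw [Nat.choose_two_right, Nat.add_sub_cancel, ← h, Nat.mul_div_cancel_left _ two_pos]

section DerivedDesign

variable {V : Type*} {Γ : SimpleGraph V} {𝓑 : Set (Set V)} {B : Set V}

/-- The incidence relation of `𝓓(B)`: the block indexed by `C` is the trace on `B` of the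
neighbourhood of `C`. -/
def derivedIncidence (Γ : SimpleGraph V) (𝓑 : Set (Set V)) (B : Set V) (x : B)
    (C : ↥(𝓑 \ {B})) : Prop :=
  ∃ y ∈ (C : Set V), Γ.Adj x y

theorem isBalancedDesign_derivedIncidence {r k lam : ℕ}
    (hk : ∀ B' ∈ 𝓑, B ≠ B' → {x ∈ B | ∃ y ∈ B', Γ.Adj x y}.ncard = k)
    (hr : ∀ x ∈ B, {B' | B' ∈ 𝓑 ∧ B' ≠ B ∧ ∃ y ∈ B', Γ.Adj x y}.ncard = r)
    (hlam : ∀ x ∈ B, ∀ y ∈ B, x ≠ y →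
      {B' | B' ∈ 𝓑 ∧ B' ≠ B ∧ (∃ z ∈ B', Γ.Adj x z) ∧ (∃ z ∈ B', Γ.Adj y z)}.ncard = lam) :
    IsBalancedDesign (derivedIncidence Γ 𝓑 B) r k lam where
  rep x := (Set.ncard_setOf_coe_diff_singleton _ _ _).trans (hr x x.2)
  blockSize C := (Set.ncard_setOf_coe _ _).trans (hk C C.2.1 (Ne.symm C.2.2))
  pair x y hxy :=
    (Set.ncard_setOf_coe_diff_singleton _ _ _).trans (hlam x x.2 y y.2 (Subtype.coe_ne_coe.2 hxy))

theorem IsBalancedDesign.eq_of_setOf_adj_eq [Finite V] {r k lam : ℕ}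
    (hD : IsBalancedDesign (derivedIncidence Γ 𝓑 B) r k lam) (hlt : lam < r)
    (hcard : Nat.card B = Nat.card ↥(𝓑 \ {B})) {B₁ B₂ : Set V} (hB₁ : B₁ ∈ 𝓑) (hB₂ : B₂ ∈ 𝓑)
    (h₁ : B₁ ≠ B) (h₂ : B₂ ≠ B)
    (heq : {x ∈ B | ∃ y ∈ B₁, Γ.Adj x y} = {x ∈ B | ∃ y ∈ B₂, Γ.Adj x y}) : B₁ = B₂ := by
  refine congrArg Subtype.val
    (hD.injective_of_card_eq hlt hcard (a₁ := ⟨B₁, hB₁, h₁⟩) (a₂ := ⟨B₂, hB₂, h₂⟩)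
      (Set.ext fun x => ?_))
  simpa [derivedIncidence, x.2] using Set.ext_iff.1 heq x

theorem ncard_neighborSet_inter_eq_one [Finite V] {B' : Set V} {x y : V} (hx : x ∈ B)
    (hy : y ∈ B') (hxy : Γ.Adj x y) (hk : {z ∈ B' | ∃ w ∈ B, Γ.Adj z w}.ncard = 1) :
    (Γ.neighborSet x ∩ B').ncard = 1 := by
  refine le_antisymm (hk ▸ Set.ncard_le_ncard ?_) ((Set.ncard_pos (Set.toFinite _)).2 ⟨y, hxy, hy⟩)
  exact fun z hz => ⟨hz.2, x, hx, hz.1.symm⟩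

end DerivedDesign

theorem stmt6_general {V G : Type*} [Fintype V] [Group G] [MulAction G V]
    (Γ : SimpleGraph V) (𝓑 : Set (Set V))
    (hpart : IsGPartition G 𝓑)
    (v b s m t r k lam : ℕ)
    (hcomplete : ∀ B ∈ 𝓑, ∀ B' ∈ 𝓑, B ≠ B' → BlockAdj Γ B B')
    (hcard : 𝓑.ncard = b + 1) (hb1 : 1 ≤ b)
    (hv : ∀ B ∈ 𝓑, B.ncard = v)
    (ht : ∀ B ∈ 𝓑, ∀ B' ∈ 𝓑, B ≠ B' → ∀ x ∈ B,
      (Γ.neighborSet x ∩ B').ncard = 0 ∨ (Γ.neighborSet x ∩ B').ncard = t)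
    (hs : ∀ x : V, (Γ.neighborSet x).ncard = s)
    (hk : ∀ B ∈ 𝓑, ∀ B' ∈ 𝓑, B ≠ B' → {x ∈ B | ∃ y ∈ B', Γ.Adj x y}.ncard = k)
    (hr : ∀ B ∈ 𝓑, ∀ x ∈ B, {B' | B' ∈ 𝓑 ∧ B' ≠ B ∧ ∃ y ∈ B', Γ.Adj x y}.ncard = r)
    (hlam : ∀ B ∈ 𝓑, ∀ x ∈ B, ∀ y ∈ B, x ≠ y →
      {B' | B' ∈ 𝓑 ∧ B' ≠ B ∧ (∃ z ∈ B', Γ.Adj x z) ∧ (∃ z ∈ B', Γ.Adj y z)}.ncard = lam)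
    (hsr : s = t * r) (hmk : m = t * k) :
    v < b ∨
    (v = b ∧ lam = 0 ∧ t = 1 ∧ k = 1 ∧ m = 1 ∧ r = 1 ∧
      (∀ x : V, (Γ.neighborSet x).ncard = 1) ∧ Γ.edgeSet.ncard = (v + 1).choose 2) ∨
    (v = k ∧ b = r ∧ ∀ B ∈ 𝓑, ∀ B' ∈ 𝓑, B' ≠ B → ∀ x ∈ B, ∃ y ∈ B', Γ.Adj x y) ∨
    (v = b ∧ 2 ≤ k ∧ k < v ∧ 1 ≤ lam ∧
      ∀ B ∈ 𝓑, ∀ B₁ ∈ 𝓑, ∀ B₂ ∈ 𝓑, B₁ ≠ B → B₂ ≠ B →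
        {x ∈ B | ∃ y ∈ B₁, Γ.Adj x y} = {x ∈ B | ∃ y ∈ B₂, Γ.Adj x y} → B₁ = B₂) := by
  classical
  obtain ⟨B₀, hB₀, B₁, hB₁, h01⟩ : ∃ B₀ ∈ 𝓑, ∃ B₁ ∈ 𝓑, B₀ ≠ B₁ := by
    simpa using (Set.one_lt_ncard_iff (Set.toFinite 𝓑)).1 (by omega)
  obtain ⟨-, x₀, hx₀, y₀, hy₀, hadj⟩ := hcomplete B₀ hB₀ B₁ hB₁ h01
  have hD B (hB : B ∈ 𝓑) : IsBalancedDesign (derivedIncidence Γ 𝓑 B) r k lam :=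
    isBalancedDesign_derivedIncidence (hk B hB) (hr B hB) (hlam B hB)
  have hb B (hB : B ∈ 𝓑) : Nat.card ↥(𝓑 \ {B}) = b := by
    rw [Nat.card_coe_set_eq, Set.ncard_sdiff_singleton_of_mem hB, hcard, Nat.add_sub_cancel]
  have : Nonempty ↥(𝓑 \ {B₀}) := ⟨⟨B₁, hB₁, h01.symm⟩⟩
  have hk₀ := hk B₀ hB₀ B₁ hB₁ h01
  have hk0 : 0 < k := hk₀ ▸ (Set.ncard_pos (Set.toFinite _)).2 ⟨x₀, hx₀, y₀, hy₀, hadj⟩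
  have hkv : k ≤ v := hk₀ ▸ hv B₀ hB₀ ▸ Set.ncard_le_ncard (Set.sep_subset _ _)
  have hvr : v * r = b * k := hv B₀ hB₀ ▸ hb B₀ hB₀ ▸
    card_mul_eq_card_mul_of_regular (hD B₀ hB₀).rep (hD B₀ hB₀).blockSize
  obtain hkv | hkv := hkv.eq_or_lt
  · refine Or.inr <| Or.inr <| Or.inl ⟨hkv.symm, hb B₀ hB₀ ▸
      ((hD B₀ hB₀).rep_eq_card_of_blockSize_eq_card (hkv.trans (hv B₀ hB₀).symm) ⟨x₀, hx₀⟩).symm,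
      fun B hB B' hB' hne x hx => ?_⟩
    exact (hD B hB).incident_of_blockSize_eq_card (hkv.trans (hv B hB).symm) ⟨x, hx⟩ ⟨B', hB', hne⟩
  have hlr : lam < r :=
    (hD B₀ hB₀).lam_lt_rep_of_blockSize_lt hk0 (by rwa [Nat.card_coe_set_eq, hv B₀ hB₀])
  have : Nontrivial ↥B₀ := by
    rw [← Finite.one_lt_card_iff_nontrivial, Nat.card_coe_set_eq, hv B₀ hB₀]; omega
  have hk2 := (hD B₀ hB₀).lam_pos_iff
  obtain hlam0 | hlam0 := Nat.eq_zero_or_pos lam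
  · have hk1 : k = 1 := by omega
    have ht1 : t = 1 := by
      have := ncard_neighborSet_inter_eq_one hx₀ hy₀ hadj (hk1 ▸ hk B₁ hB₁ B₀ hB₀ h01.symm)
      rcases ht B₀ hB₀ B₁ hB₁ h01 x₀ hx₀ with h | h <;> omega
    obtain hr1 | hr2 : r = 1 ∨ 2 ≤ r := by omega
    · have hvb : v = b := by simpa [hk1, hr1] using hvr
      have hdeg (x : V) : (Γ.neighborSet x).ncard = 1 := by rw [hs, hsr, ht1, hr1]
      exact Or.inr <| Or.inl ⟨hvb, hlam0, ht1, hk1, by rw [hmk, ht1, hk1], hr1, hdeg,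
        SimpleGraph.ncard_edgeSet_eq_choose_two hpart.1 (hvb ▸ hcard) hv hdeg⟩
    · exact Or.inl (by nlinarith)
  have hvb : v ≤ b := hv B₀ hB₀ ▸ hb B₀ hB₀ ▸ (hD B₀ hB₀).card_le_card hlr
  obtain hvb | hvb := hvb.lt_or_eq
  · exact Or.inl hvb
  refine Or.inr <| Or.inr <| Or.inr ⟨hvb, hk2.1 hlam0, hkv, hlam0,
    fun B hB B₁ hB₁ B₂ hB₂ => (hD B hB).eq_of_setOf_adj_eq hlr ?_ hB₁ hB₂⟩
  rw [hb B hB, Nat.card_coe_set_eq, hv B hB, hvb]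

/-- with complete quotient `K_{b+1}` and `G(B)^B` 2-transitive, one of:
(a) `v < b`; (b) `v = b`, `λ = 0`, `t = k = m = r = 1` and `Γ` is a perfect matching with
`(v+1 choose 2)` edges; (c) `v = k` and `𝓓(B)` has a single block repeated `b = r` times;
(d) `v = b`, `2 ≤ k < v` and `𝓓(B)` is a symmetric 2-design with no repeated blocks. -/
theorem stmt6 {V G : Type*} [Fintype V] [Group G] [MulAction G V]
    (Γ : SimpleGraph V) (𝓑 : Set (Set V))
    (hsym : IsGSymmetric (G := G) Γ) (hpart : IsGPartition G 𝓑)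
    (v b s m t r k lam : ℕ)
    (hcomplete : ∀ B ∈ 𝓑, ∀ B' ∈ 𝓑, B ≠ B' → BlockAdj Γ B B')
    (hcard : 𝓑.ncard = b + 1) (hb1 : 1 ≤ b)
    (hv : ∀ B ∈ 𝓑, B.ncard = v)
    (h2trans : ∀ B ∈ 𝓑, ∀ x₁ ∈ B, ∀ y₁ ∈ B, ∀ x₂ ∈ B, ∀ y₂ ∈ B, x₁ ≠ y₁ → x₂ ≠ y₂ →
      ∃ g : G, g • B = B ∧ g • x₁ = x₂ ∧ g • y₁ = y₂)
    (ht1 : 1 ≤ t)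
    (ht : ∀ B ∈ 𝓑, ∀ B' ∈ 𝓑, B ≠ B' → ∀ x ∈ B,
      (Γ.neighborSet x ∩ B').ncard = 0 ∨ (Γ.neighborSet x ∩ B').ncard = t)
    (hs : ∀ x : V, (Γ.neighborSet x).ncard = s)
    (hm : ∀ B ∈ 𝓑, ∀ B' ∈ 𝓑, B ≠ B' →
      {e : V × V | e.1 ∈ B ∧ e.2 ∈ B' ∧ Γ.Adj e.1 e.2}.ncard = m)
    (hk : ∀ B ∈ 𝓑, ∀ B' ∈ 𝓑, B ≠ B' → {x ∈ B | ∃ y ∈ B', Γ.Adj x y}.ncard = k)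
    (hr : ∀ B ∈ 𝓑, ∀ x ∈ B, {B' | B' ∈ 𝓑 ∧ B' ≠ B ∧ ∃ y ∈ B', Γ.Adj x y}.ncard = r)
    (hlam : ∀ B ∈ 𝓑, ∀ x ∈ B, ∀ y ∈ B, x ≠ y →
      {B' | B' ∈ 𝓑 ∧ B' ≠ B ∧ (∃ z ∈ B', Γ.Adj x z) ∧ (∃ z ∈ B', Γ.Adj y z)}.ncard = lam)
    (hsr : s = t * r) (hmk : m = t * k) :
    v < b ∨
    (v = b ∧ lam = 0 ∧ t = 1 ∧ k = 1 ∧ m = 1 ∧ r = 1 ∧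
      (∀ x : V, (Γ.neighborSet x).ncard = 1) ∧ Γ.edgeSet.ncard = (v + 1).choose 2) ∨
    (v = k ∧ b = r ∧ ∀ B ∈ 𝓑, ∀ B' ∈ 𝓑, B' ≠ B → ∀ x ∈ B, ∃ y ∈ B', Γ.Adj x y) ∨
    (v = b ∧ 2 ≤ k ∧ k < v ∧ 1 ≤ lam ∧
      ∀ B ∈ 𝓑, ∀ B₁ ∈ 𝓑, ∀ B₂ ∈ 𝓑, B₁ ≠ B → B₂ ≠ B →
        {x ∈ B | ∃ y ∈ B₁, Γ.Adj x y} = {x ∈ B | ∃ y ∈ B₂, Γ.Adj x y} → B₁ = B₂) :=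
  stmt6_general Γ 𝓑 hpart v b s m t r k lam hcomplete hcard hb1 hv ht hs hk hr hlam hsr hmk
end

section
/- Let Γ be a G-symmetric graph with G-partition 𝓑 with complete quotient K_{v+1}, blocks of size v, G(B)^B 2-transitive, t = 1 and k = v−1 ≥ 2. Then r = k = v−1, every vertex x ∈ B_i fails to be joined to exactly one other block B_j, giving a labelling x = ij of vertices by ordered pairs of distinct indices 0 ≤ i,j ≤ v on which G acts coordinate-wise, and G is 3-transitive on the index set {0,1,…,v}. -/
open scoped Pointwise

/-- complete quotient `K_{v+1}`, blocks of size `v`, `G(B)^B` 2-transitive,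
`t = 1`, `k = v-1 ≥ 2`: then `Γ` is `(v-1)`-regular (`r = k = v-1`), vertices are labelled
by ordered pairs of distinct indices, `G` acts coordinate-wise, and `G` is 3-transitive on
the index set. -/
theorem stmt11 {V G : Type*} [Fintype V] [Group G] [MulAction G V]
    (Γ : SimpleGraph V) (v : ℕ) (hv3 : 3 ≤ v) (Bl : Fin (v + 1) → Set V)
    (hsym : IsGSymmetric (G := G) Γ)
    (hpartition : ∀ x : V, ∃! i : Fin (v + 1), x ∈ Bl i)
    (hGinv : ∀ (g : G) (i : Fin (v + 1)), ∃ j : Fin (v + 1), g • Bl i = Bl j)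
    (hsize : ∀ i, (Bl i).ncard = v)
    (hcomplete : ∀ i j : Fin (v + 1), i ≠ j → BlockAdj Γ (Bl i) (Bl j))
    (h2trans : ∀ i : Fin (v + 1), ∀ x₁ ∈ Bl i, ∀ y₁ ∈ Bl i, ∀ x₂ ∈ Bl i, ∀ y₂ ∈ Bl i,
      x₁ ≠ y₁ → x₂ ≠ y₂ → ∃ g : G, g • Bl i = Bl i ∧ g • x₁ = x₂ ∧ g • y₁ = y₂)
    (ht : ∀ i j : Fin (v + 1), i ≠ j → ∀ x ∈ Bl i,
      (Γ.neighborSet x ∩ Bl j).ncard = 0 ∨ (Γ.neighborSet x ∩ Bl j).ncard = 1)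
    (hk : ∀ i j : Fin (v + 1), i ≠ j →
      {x ∈ Bl i | ∃ y ∈ Bl j, Γ.Adj x y}.ncard = v - 1) :
    (∀ x : V, (Γ.neighborSet x).ncard = v - 1) ∧
    ∃ ℓ : V → Fin (v + 1) × Fin (v + 1),
      (∀ x : V, (ℓ x).1 ≠ (ℓ x).2 ∧ x ∈ Bl (ℓ x).1 ∧ ∀ y ∈ Bl (ℓ x).2, ¬ Γ.Adj x y) ∧
      Function.Injective ℓ ∧
      (∀ p : Fin (v + 1) × Fin (v + 1), p.1 ≠ p.2 → ∃ x : V, ℓ x = p) ∧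
      ∃ φ : G →* Equiv.Perm (Fin (v + 1)),
        (∀ (g : G) (x : V), ℓ (g • x) = (φ g (ℓ x).1, φ g (ℓ x).2)) ∧
        (∀ a₁ a₂ a₃ b₁ b₂ b₃ : Fin (v + 1), a₁ ≠ a₂ → a₁ ≠ a₃ → a₂ ≠ a₃ →
          b₁ ≠ b₂ → b₁ ≠ b₃ → b₂ ≠ b₃ →
          ∃ g : G, φ g a₁ = b₁ ∧ φ g a₂ = b₂ ∧ φ g a₃ = b₃) := by
  classical
  obtain ⟨hadj, htrans, hflag⟩ := hsym
  have hv0 : 0 < v := by omega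
  -- adjacency is a `G`-congruence
  have hadj_iff : ∀ (g : G) (x y : V), Γ.Adj (g • x) (g • y) ↔ Γ.Adj x y := by
    intro g x y
    constructor
    · intro h
      have h2 := hadj g⁻¹ _ _ h
      simpa using h2
    · exact hadj g x y
  -- block index of a vertex
  have hbi' : ∀ x : V, ∃ i, x ∈ Bl i ∧ ∀ j, x ∈ Bl j → j = i := by
    intro x
    obtain ⟨i, h1, h2⟩ := hpartition x
    exact ⟨i, h1, h2⟩
  choose bi hbi hbiu using hbi'
  -- blocks are finite and nonempty, and pairwise distinct
  have hBfin : ∀ i, (Bl i).Finite := fun i => Set.toFinite _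
  have hBne : ∀ i, (Bl i).Nonempty := by
    intro i
    apply Set.nonempty_of_ncard_ne_zero
    rw [hsize i]; omega
  have hBlinj : ∀ i j, Bl i = Bl j → i = j := by
    intro i j h
    obtain ⟨x, hx⟩ := hBne i
    have hx' : x ∈ Bl j := h ▸ hx
    exact (hbiu x i hx).trans (hbiu x j hx').symm
  -- the permutation induced by `g` on block indices
  choose σ hσ using hGinv
  have hσu : ∀ (g : G) (i j : Fin (v+1)), g • Bl i = Bl j → σ g i = j := by
    intro g i j h
    exact hBlinj _ _ ((hσ g i).symm.trans h)
  have hσ_mul : ∀ (g h : G) (i : Fin (v+1)), σ (g * h) i = σ g (σ h i) := by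
    intro g h i
    apply hσu
    rw [mul_smul, hσ h i, hσ g (σ h i)]
  have hσ_one : ∀ i, σ (1 : G) i = i := by
    intro i; apply hσu; rw [one_smul]
  have hσ_inv : ∀ (g : G) (i : Fin (v+1)), σ g⁻¹ (σ g i) = i := by
    intro g i
    rw [← hσ_mul, inv_mul_cancel, hσ_one]
  have hσ_inv' : ∀ (g : G) (i : Fin (v+1)), σ g (σ g⁻¹ i) = i := by
    intro g i
    rw [← hσ_mul, mul_inv_cancel, hσ_one]
  have hσinj : ∀ (g : G), Function.Injective (σ g) := by
    intro g a b h
    have := congrArg (σ g⁻¹) h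
    rwa [hσ_inv, hσ_inv] at this
  have hmemσ : ∀ (g : G) (i : Fin (v+1)) (x : V), x ∈ Bl i → g • x ∈ Bl (σ g i) := by
    intro g i x hx
    rw [← hσ g i]
    exact Set.smul_mem_smul_set hx
  -- no edges inside a block
  have i0 : Fin (v+1) := ⟨0, by omega⟩
  have no_intra : ∀ (i : Fin (v+1)), ∀ x ∈ Bl i, ∀ y ∈ Bl i, ¬ Γ.Adj x y := by
    intro i x hx y hy hxy
    have h01 : (⟨0, by omega⟩ : Fin (v+1)) ≠ ⟨1, by omega⟩ := by
      simp [Fin.ext_iff]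
    obtain ⟨-, a, ha, b, hb, hab⟩ := hcomplete _ _ h01
    obtain ⟨g, hgx, hgy⟩ := hflag x y a b hxy hab
    have h1 : σ g i = ⟨0, by omega⟩ := by
      have ha' : g • x ∈ Bl (σ g i) := hmemσ g i x hx
      rw [hgx] at ha'
      exact (hbiu a _ ha').trans (hbiu a _ ha).symm
    have h2 : σ g i = ⟨1, by omega⟩ := by
      have hb' : g • y ∈ Bl (σ g i) := hmemσ g i y hy
      rw [hgy] at hb'
      exact (hbiu b _ hb').trans (hbiu b _ hb).symm
    exact h01 (h1 ▸ h2)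
  -- miss : x has no neighbour in block j
  have Mcard : ∀ i j : Fin (v+1), i ≠ j →
      {x ∈ Bl i | ∀ y ∈ Bl j, ¬ Γ.Adj x y}.ncard = 1 := by
    intro i j hij
    have hset : {x ∈ Bl i | ∀ y ∈ Bl j, ¬ Γ.Adj x y}
        = Bl i \ {x ∈ Bl i | ∃ y ∈ Bl j, Γ.Adj x y} := by
      ext x
      simp only [Set.mem_setOf_eq, Set.mem_diff]
      constructor
      · rintro ⟨hx, hm⟩
        exact ⟨hx, fun h => by obtain ⟨-, y, hy, hxy⟩ := h; exact hm y hy hxy⟩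
      · rintro ⟨hx, hm⟩
        refine ⟨hx, fun y hy hxy => hm ⟨hx, y, hy, hxy⟩⟩
    rw [hset, Set.ncard_diff (fun x hx => hx.1) (Set.toFinite _), hsize, hk i j hij]
    omega
  -- degrees: number of neighbours plus number of missed blocks is v
  have deg_add : ∀ x : V,
      (Γ.neighborSet x).ncard
        + ((Finset.univ.erase (bi x)).filter
            (fun j => ∀ y ∈ Bl j, ¬ Γ.Adj x y)).card = v := by
    intro x
    have hcard : (Γ.neighborSet x).ncard
        = ((Finset.univ.erase (bi x)).filter
            (fun j => ¬ ∀ y ∈ Bl j, ¬ Γ.Adj x y)).card := by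
      rw [Set.ncard_eq_toFinset_card _ (Set.toFinite _)]
      apply Finset.card_bij (fun y _ => bi y)
      · intro y hy
        rw [Set.Finite.mem_toFinset] at hy
        have hyx : Γ.Adj x y := hy
        refine Finset.mem_filter.mpr ⟨Finset.mem_erase.mpr ⟨?_, Finset.mem_univ _⟩, ?_⟩
        · intro h
          exact no_intra (bi x) x (hbi x) y (h ▸ hbi y) hyx
        · push_neg
          exact ⟨y, hbi y, hyx⟩
      · intro y₁ hy₁ y₂ hy₂ h
        rw [Set.Finite.mem_toFinset] at hy₁ hy₂
        by_contra hne
        have hji : bi y₁ ≠ bi x := by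
          intro hh
          exact no_intra (bi x) x (hbi x) y₁ (hh ▸ hbi y₁) hy₁
        have hle := ht (bi x) (bi y₁) (fun hh => hji hh.symm) x (hbi x)
        have h1 : y₁ ∈ Γ.neighborSet x ∩ Bl (bi y₁) := ⟨hy₁, hbi y₁⟩
        have h2 : y₂ ∈ Γ.neighborSet x ∩ Bl (bi y₁) := ⟨hy₂, h ▸ hbi y₂⟩
        have : (Γ.neighborSet x ∩ Bl (bi y₁)).ncard ≤ 1 := by
          rcases hle with h | h <;> omega
        exact hne ((Set.ncard_le_one (Set.toFinite _)).mp this y₁ h1 y₂ h2)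
      · intro j hj
        rw [Finset.mem_filter] at hj
        obtain ⟨hj1, hj2⟩ := hj
        push_neg at hj2
        obtain ⟨y, hy, hxy⟩ := hj2
        refine ⟨y, Set.Finite.mem_toFinset _ |>.mpr hxy, (hbiu y j hy).symm⟩
    rw [hcard]
    rw [add_comm]
    rw [Finset.card_filter_add_card_filter_not]
    rw [Finset.card_erase_of_mem (Finset.mem_univ _), Finset.card_univ, Fintype.card_fin]
    omega
  -- degree is constant
  have deg_smul : ∀ (g : G) (x : V),
      (Γ.neighborSet (g • x)).ncard = (Γ.neighborSet x).ncard := by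
    intro g x
    have himg : Γ.neighborSet (g • x) = (fun z => g • z) '' Γ.neighborSet x := by
      ext y
      simp only [SimpleGraph.mem_neighborSet, Set.mem_image]
      constructor
      · intro h
        refine ⟨g⁻¹ • y, ?_, by simp⟩
        have := (hadj_iff g x (g⁻¹ • y)).mp ?_
        · exact this
        · simpa using h
      · rintro ⟨z, hz, rfl⟩
        exact (hadj_iff g x z).mpr hz
    rw [himg, Set.ncard_image_of_injective _ (MulAction.injective g)]
  have deg_const : ∀ x y : V, (Γ.neighborSet x).ncard = (Γ.neighborSet y).ncard := by
    intro x y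
    obtain ⟨g, hg⟩ := htrans x y
    rw [← hg, deg_smul]
  -- miss-count is constant
  set mc : V → ℕ := fun x => ((Finset.univ.erase (bi x)).filter
            (fun j => ∀ y ∈ Bl j, ¬ Γ.Adj x y)).card with hmc
  have mc_const : ∀ x y : V, mc x = mc y := by
    intro x y
    have h1 := deg_add x
    have h2 := deg_add y
    have h3 := deg_const x y
    simp only [hmc]
    omega
  -- double counting over block i0
  have sum_eq : ∑ x ∈ (hBfin i0).toFinset, mc x = v := by
    have hstep : ∀ x ∈ (hBfin i0).toFinset, mc x
        = ((Finset.univ.erase i0).filter (fun j => ∀ y ∈ Bl j, ¬ Γ.Adj x y)).card := by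
      intro x hx
      rw [Set.Finite.mem_toFinset] at hx
      simp only [hmc, hbiu x i0 hx]
    rw [Finset.sum_congr rfl hstep]
    have hswap : ∑ x ∈ (hBfin i0).toFinset,
        ((Finset.univ.erase i0).filter (fun j => ∀ y ∈ Bl j, ¬ Γ.Adj x y)).card
        = ∑ j ∈ Finset.univ.erase i0,
          (((hBfin i0).toFinset).filter (fun x => ∀ y ∈ Bl j, ¬ Γ.Adj x y)).card := by
      simp only [Finset.card_filter]
      exact Finset.sum_comm
    rw [hswap]
    have hterm : ∀ j ∈ Finset.univ.erase i0,
        (((hBfin i0).toFinset).filter (fun x => ∀ y ∈ Bl j, ¬ Γ.Adj x y)).card = 1 := by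
      intro j hj
      have hij : i0 ≠ j := fun h => (Finset.mem_erase.mp hj).1 h.symm
      have := Mcard i0 j hij
      rw [Set.ncard_eq_toFinset_card _ (Set.toFinite _)] at this
      rw [← this]
      congr 1
      ext x
      simp only [Set.Finite.mem_toFinset, Finset.mem_filter, Set.mem_setOf_eq]
    rw [Finset.sum_congr rfl hterm]
    rw [Finset.sum_const, smul_eq_mul, mul_one]
    rw [Finset.card_erase_of_mem (Finset.mem_univ _), Finset.card_univ, Fintype.card_fin]
    omega
  -- each vertex misses exactly one block
  have mc_one : ∀ x : V, mc x = 1 := by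
    intro x
    have hA : (hBfin i0).toFinset.card = v := by
      rw [← Set.ncard_eq_toFinset_card _ (hBfin i0), hsize]
    have : ∑ y ∈ (hBfin i0).toFinset, mc y = (hBfin i0).toFinset.card * mc x := by
      rw [Finset.sum_congr rfl (fun y _ => mc_const y x), Finset.sum_const, smul_eq_mul]
    rw [sum_eq, hA] at this
    exact (Nat.eq_of_mul_eq_mul_left hv0 (show v * mc x = v * 1 by omega)).symm ▸ rfl
  -- degree is v - 1
  have deg_eq : ∀ x : V, (Γ.neighborSet x).ncard = v - 1 := by
    intro x
    have h1 := deg_add x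
    have h2 := mc_one x
    simp only [hmc] at h2
    omega
  refine ⟨deg_eq, ?_⟩
  -- the second index of the labelling
  have hjx' : ∀ x : V, ∃ j, (Finset.univ.erase (bi x)).filter
      (fun j => ∀ y ∈ Bl j, ¬ Γ.Adj x y) = {j} := by
    intro x
    exact Finset.card_eq_one.mp (mc_one x)
  choose jx hjx using hjx'
  have hjx_ne : ∀ x : V, jx x ≠ bi x := by
    intro x
    have : jx x ∈ (Finset.univ.erase (bi x)).filter
        (fun j => ∀ y ∈ Bl j, ¬ Γ.Adj x y) := by
      rw [hjx x]; exact Finset.mem_singleton_self _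
    exact (Finset.mem_erase.mp (Finset.mem_filter.mp this).1).1
  have hjx_miss : ∀ x : V, ∀ y ∈ Bl (jx x), ¬ Γ.Adj x y := by
    intro x
    have : jx x ∈ (Finset.univ.erase (bi x)).filter
        (fun j => ∀ y ∈ Bl j, ¬ Γ.Adj x y) := by
      rw [hjx x]; exact Finset.mem_singleton_self _
    exact (Finset.mem_filter.mp this).2
  have hjx_uniq : ∀ (x : V) (j : Fin (v+1)), j ≠ bi x → (∀ y ∈ Bl j, ¬ Γ.Adj x y) →
      j = jx x := by
    intro x j hne hm
    have : j ∈ (Finset.univ.erase (bi x)).filter (fun j => ∀ y ∈ Bl j, ¬ Γ.Adj x y) :=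
      Finset.mem_filter.mpr ⟨Finset.mem_erase.mpr ⟨hne, Finset.mem_univ _⟩, hm⟩
    rw [hjx x] at this
    exact Finset.mem_singleton.mp this
  set ℓ : V → Fin (v+1) × Fin (v+1) := fun x => (bi x, jx x) with hℓ
  have ℓprop : ∀ x : V, (ℓ x).1 ≠ (ℓ x).2 ∧ x ∈ Bl (ℓ x).1 ∧ ∀ y ∈ Bl (ℓ x).2, ¬ Γ.Adj x y :=
    fun x => ⟨fun h => hjx_ne x h.symm, hbi x, hjx_miss x⟩
  -- injectivity
  have ℓinj : Function.Injective ℓ := by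
    intro x y h
    simp only [hℓ, Prod.mk.injEq] at h
    obtain ⟨h1, h2⟩ := h
    have hij : bi x ≠ jx x := fun h => hjx_ne x h.symm
    obtain ⟨a, ha⟩ := Set.ncard_eq_one.mp (Mcard (bi x) (jx x) hij)
    have hx : x ∈ {z ∈ Bl (bi x) | ∀ w ∈ Bl (jx x), ¬ Γ.Adj z w} := ⟨hbi x, hjx_miss x⟩
    have hy : y ∈ {z ∈ Bl (bi x) | ∀ w ∈ Bl (jx x), ¬ Γ.Adj z w} := by
      rw [h1, h2]
      exact ⟨hbi y, hjx_miss y⟩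
    rw [ha] at hx hy
    rw [Set.mem_singleton_iff.mp hx, Set.mem_singleton_iff.mp hy]
  -- surjectivity onto distinct pairs
  have ℓsurj : ∀ p : Fin (v + 1) × Fin (v + 1), p.1 ≠ p.2 → ∃ x : V, ℓ x = p := by
    rintro ⟨i, j⟩ hij
    obtain ⟨a, ha⟩ := Set.ncard_eq_one.mp (Mcard i j hij)
    have hx : a ∈ {z ∈ Bl i | ∀ w ∈ Bl j, ¬ Γ.Adj z w} := by rw [ha]; rfl
    obtain ⟨ha1, ha2⟩ := hx
    have hb : bi a = i := (hbiu a i ha1).symm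
    refine ⟨a, ?_⟩
    simp only [hℓ, Prod.mk.injEq]
    refine ⟨hb, ?_⟩
    rw [← hjx_uniq a j (by rw [hb]; exact fun h => hij h.symm) ha2]
  -- the permutation homomorphism
  set φ : G →* Equiv.Perm (Fin (v + 1)) :=
    { toFun := fun g =>
        { toFun := σ g
          invFun := σ g⁻¹
          left_inv := hσ_inv g
          right_inv := hσ_inv' g }
      map_one' := Equiv.ext fun i => hσ_one i
      map_mul' := fun g h => Equiv.ext fun i => hσ_mul g h i } with hφ
  have hφapp : ∀ (g : G) (i : Fin (v+1)), φ g i = σ g i := fun g i => rfl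
  -- equivariance of the labelling
  have ℓequiv : ∀ (g : G) (x : V), ℓ (g • x) = (φ g (ℓ x).1, φ g (ℓ x).2) := by
    intro g x
    have h1 : bi (g • x) = σ g (bi x) := (hbiu _ _ (hmemσ g (bi x) x (hbi x))).symm
    have hmiss : ∀ y ∈ Bl (σ g (jx x)), ¬ Γ.Adj (g • x) y := by
      intro y hy hadj'
      rw [← hσ g (jx x)] at hy
      obtain ⟨z, hz, rfl⟩ := Set.mem_smul_set.mp hy
      exact hjx_miss x z hz ((hadj_iff g x z).mp hadj')
    have h2 : σ g (jx x) = jx (g • x) := by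
      apply hjx_uniq
      · rw [h1]
        exact fun h => hjx_ne x (hσinj g h)
      · exact hmiss
    simp only [hℓ, Prod.mk.injEq, hφapp]
    exact ⟨h1, h2.symm⟩
  -- pair transitivity
  have pair_trans : ∀ a₁ a₂ b₁ b₂ : Fin (v+1), a₁ ≠ a₂ → b₁ ≠ b₂ →
      ∃ g : G, σ g a₁ = b₁ ∧ σ g a₂ = b₂ := by
    intro a₁ a₂ b₁ b₂ ha hb
    obtain ⟨x, hx⟩ := ℓsurj (a₁, a₂) ha
    obtain ⟨y, hy⟩ := ℓsurj (b₁, b₂) hb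
    obtain ⟨g, hg⟩ := htrans x y
    have := ℓequiv g x
    rw [hg, hx, hy] at this
    simp only [Prod.mk.injEq, hφapp] at this
    exact ⟨g, this.1.symm, this.2.symm⟩
  -- stabilizer transitivity
  have stab_trans : ∀ i j₁ j₂ j₃ j₄ : Fin (v+1),
      j₁ ≠ i → j₂ ≠ i → j₃ ≠ i → j₄ ≠ i → j₁ ≠ j₂ → j₃ ≠ j₄ →
      ∃ g : G, σ g i = i ∧ σ g j₁ = j₃ ∧ σ g j₂ = j₄ := by
    intro i j₁ j₂ j₃ j₄ h1 h2 h3 h4 h12 h34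
    obtain ⟨x₁, hx₁⟩ := ℓsurj (i, j₁) (fun h => h1 h.symm)
    obtain ⟨y₁, hy₁⟩ := ℓsurj (i, j₂) (fun h => h2 h.symm)
    obtain ⟨x₂, hx₂⟩ := ℓsurj (i, j₃) (fun h => h3 h.symm)
    obtain ⟨y₂, hy₂⟩ := ℓsurj (i, j₄) (fun h => h4 h.symm)
    have hxmem : x₁ ∈ Bl i := by
      have := (ℓprop x₁).2.1; rw [hx₁] at this; exact this
    have hymem : y₁ ∈ Bl i := by
      have := (ℓprop y₁).2.1; rw [hy₁] at this; exact this
    have hxmem₂ : x₂ ∈ Bl i := by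
      have := (ℓprop x₂).2.1; rw [hx₂] at this; exact this
    have hymem₂ : y₂ ∈ Bl i := by
      have := (ℓprop y₂).2.1; rw [hy₂] at this; exact this
    have hne1 : x₁ ≠ y₁ := by
      intro h
      rw [h, hy₁] at hx₁
      exact h12 (congrArg Prod.snd hx₁).symm
    have hne2 : x₂ ≠ y₂ := by
      intro h
      rw [h, hy₂] at hx₂
      exact h34 (congrArg Prod.snd hx₂).symm
    obtain ⟨g, hgB, hgx, hgy⟩ := h2trans i x₁ hxmem y₁ hymem x₂ hxmem₂ y₂ hymem₂ hne1 hne2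
    have hσi : σ g i = i := hσu g i i hgB
    have e1 := ℓequiv g x₁
    rw [hgx, hx₁, hx₂] at e1
    simp only [Prod.mk.injEq, hφapp] at e1
    have e2 := ℓequiv g y₁
    rw [hgy, hy₁, hy₂] at e2
    simp only [Prod.mk.injEq, hφapp] at e2
    exact ⟨g, hσi, e1.2.symm, e2.2.symm⟩
  refine ⟨ℓ, ℓprop, ℓinj, ℓsurj, φ, ℓequiv, ?_⟩
  -- 3-transitivity
  intro a₁ a₂ a₃ b₁ b₂ b₃ ha12 ha13 ha23 hb12 hb13 hb23
  obtain ⟨g₁, hg1, hg2⟩ := pair_trans a₁ a₂ b₁ b₂ ha12 hb12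
  set c := σ g₁ a₃ with hc
  have hc1 : c ≠ b₁ := by
    intro h
    exact ha13 (hσinj g₁ (by rw [← hc, h, ← hg1])).symm
  have hc2 : c ≠ b₂ := by
    intro h
    exact ha23 (hσinj g₁ (by rw [← hc, h, ← hg2])).symm
  obtain ⟨g₂, hgi, hgj1, hgj2⟩ := stab_trans b₁ b₂ c b₂ b₃
    (fun h => hb12 h.symm) hc1 (fun h => hb12 h.symm) (fun h => hb13 h.symm)
    (fun h => hc2 h.symm) hb23
  refine ⟨g₂ * g₁, ?_, ?_, ?_⟩
  · rw [hφapp, hσ_mul, hg1, hgi]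
  · rw [hφapp, hσ_mul, hg2, hgj1]
  · rw [hφapp, hσ_mul, ← hc, hgj2]
end

section
/- Let G = AGL(d,2) with d ≥ 2 (or G = Z_2^4⋅A_7 < AGL(4,2) with d = 4) act on the points of AG(d,2). For distinct points 0, 1, c, the pointwise stabilizer G(0,1,c) has exactly four fixed points in AG(d,2), namely 0, 1, c and the fourth point c' of the affine plane spanned by 0, 1, c. -/
/-!
Over `𝔽₂` the span of `b - a` and `c - a` is `{0, b - a, c - a, b + c}`, so `x` lies off the
plane through `a, b, c` exactly when `x - a ∉ span {b - a, c - a}`. An affine map fixing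
`a, b, c` fixes `a + b + c`, their affine combination with coefficients `1, 1, 1`.

For `x` off the plane, a transvection fixing `span {b - a, c - a}` and sending `x - a` to
`x - a + (b - a)`, centred at `a`, is an affine map fixing `a, b, c` and moving `x`.
For the subgroup of order `8! = 40320` of `AGL(4,2)` we count instead: if the stabilizer of
`(a, b, c)` fixed `x`, its linear parts would fix the hyperplane `span {x - a, b - a, c - a}`,
and such a linear map is determined by the image of one vector off the hyperplane, which again
lies off it. So the stabilizer has at most `16 - 8 = 8` elements, the orbit of `(a, b, c)` at
most `16³`, and `16³ · 8 < 8!`.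
-/

/-- `g` is an affine permutation of `GF(2)^d`. -/
def IsAffinePerm {d : ℕ} (g : Equiv.Perm (Fin d → ZMod 2)) : Prop :=
  ∃ (A : (Fin d → ZMod 2) ≃ₗ[ZMod 2] (Fin d → ZMod 2)) (t : Fin d → ZMod 2),
    ∀ x, g x = A x + t

open Module Submodule

theorem ZMod.eq_zero_or_one (r : ZMod 2) : r = 0 ∨ r = 1 := by
  revert r; decide

section ZModTwo

variable {V : Type*} [AddCommGroup V] [Module (ZMod 2) V]

theorem mem_span_singleton_zmod_two {u w : V} : w ∈ (ZMod 2) ∙ u ↔ w = 0 ∨ w = u := by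
  rw [mem_span_singleton]
  constructor
  · rintro ⟨r, rfl⟩
    rcases r.eq_zero_or_one with rfl | rfl <;> simp
  · rintro (rfl | rfl)
    exacts [⟨0, zero_smul _ _⟩, ⟨1, one_smul _ _⟩]

theorem mem_span_pair_zmod_two {u w v : V} :
    v ∈ span (ZMod 2) {u, w} ↔ v = 0 ∨ v = u ∨ v = w ∨ v = u + w := by
  rw [mem_span_pair]
  constructor
  · rintro ⟨r, s, rfl⟩
    rcases r.eq_zero_or_one with rfl | rfl <;>
      rcases s.eq_zero_or_one with rfl | rfl <;> simp
  · rintro (rfl | rfl | rfl | rfl)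
    exacts [⟨0, 0, by simp⟩, ⟨1, 0, by simp⟩, ⟨0, 1, by simp⟩, ⟨1, 1, by simp⟩]

theorem sub_mem_span_pair_sub_iff {a b c x : V} :
    x - a ∈ span (ZMod 2) {b - a, c - a} ↔ x = a ∨ x = b ∨ x = c ∨ x = a + b + c := by
  have hfourth : b - a + (c - a) + a = a + b + c := by
    linear_combination (norm := module) -ZModModule.add_self a
  rw [mem_span_pair_zmod_two, sub_eq_zero, sub_left_inj, sub_left_inj, sub_eq_iff_eq_add, hfourth]

theorem finrank_span_pair_zmod_two [Module.Finite (ZMod 2) V] {u w : V} (hu : u ≠ 0) (hw : w ≠ 0)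
    (huw : u ≠ w) : finrank (ZMod 2) (span (ZMod 2) {u, w}) = 2 := by
  have hu' : u ∉ (ZMod 2) ∙ w := by
    rw [mem_span_singleton_zmod_two]
    exact not_or.2 ⟨hu, huw⟩
  rw [span_insert, sup_comm, finrank_sup_span_singleton hu', finrank_span_singleton hw]

end ZModTwo

section Field

variable {K V : Type*} [Field K] [AddCommGroup V] [Module K V]

theorem exists_linearEquiv_fixing_add_of_notMem {W : Submodule K V} {u v : V} (hu : u ∈ W)
    (hv : v ∉ W) : ∃ A : V ≃ₗ[K] V, (∀ w ∈ W, A w = w) ∧ A v = v + u := by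
  obtain ⟨f, hfv, hfW⟩ := W.exists_dual_map_eq_bot_of_notMem hv inferInstance
  have hφW : ∀ w ∈ W, ((f v)⁻¹ • f) w = 0 := fun w hw => by
    simp [(Submodule.eq_bot_iff _).1 hfW (f w) (mem_map_of_mem hw)]
  refine ⟨LinearEquiv.transvection (hφW u hu), fun w hw => ?_, ?_⟩
  · simp [LinearMap.transvection.apply, hφW w hw]
  · simp [LinearMap.transvection.apply, hfv]

theorem LinearEquiv.eq_of_fixing_of_apply_eq {W : Submodule K V} {v : V} (hWv : W ⊔ K ∙ v = ⊤)
    {A B : V ≃ₗ[K] V} (hA : ∀ w ∈ W, A w = w) (hB : ∀ w ∈ W, B w = w) (hv : A v = B v) :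
    A = B := by
  refine LinearEquiv.toLinearMap_injective (LinearMap.eqLocus_eq_top.1 (top_unique ?_))
  rw [← hWv]
  refine sup_le (fun w hw => ?_) (span_le.2 (by simpa using hv))
  simp [hA w hw, hB w hw]

variable [Finite K] [FiniteDimensional K V]

theorem card_linearEquiv_fixing_le {W : Submodule K V} (hW : finrank K W + 1 = finrank K V) :
    Nat.card {A : V ≃ₗ[K] V // ∀ w ∈ W, A w = w} ≤ Nat.card V - Nat.card W := by
  have : Finite V := Module.finite_of_finite K
  obtain ⟨v, hv⟩ : ∃ v, v ∉ W := by
    by_contra! h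
    have := finrank_top K V
    rw [← eq_top_iff'.2 h] at this
    omega
  have hWv : W ⊔ K ∙ v = ⊤ := by
    apply eq_top_of_finrank_eq
    rw [finrank_sup_span_singleton hv, hW]
  have hAv : ∀ A : {A : V ≃ₗ[K] V // ∀ w ∈ W, A w = w}, A.1 v ∈ (W : Set V)ᶜ := by
    rintro ⟨A, hA⟩ hAvW
    exact hv (A.injective (hA _ hAvW) ▸ hAvW)
  calc Nat.card {A : V ≃ₗ[K] V // ∀ w ∈ W, A w = w}
      ≤ Nat.card ((W : Set V)ᶜ : Set V) :=
        Nat.card_le_card_of_injective (fun A => ⟨A.1 v, hAv A⟩) fun A B hAB =>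
          Subtype.ext (A.1.eq_of_fixing_of_apply_eq hWv A.2 B.2 (congrArg Subtype.val hAB))
    _ = Nat.card V - Nat.card W := by
      rw [Nat.card_coe_set_eq, Set.ncard_compl, ← Nat.card_coe_set_eq]
      rfl

end Field

section Affine

variable {K V : Type*} [Ring K] [AddCommGroup V] [Module K V]

def affinePermAt (a : V) (A : V ≃ₗ[K] V) : Equiv.Perm V :=
  (Equiv.subRight a).trans (A.toEquiv.trans (Equiv.addLeft a))

@[simp]
theorem affinePermAt_apply (a : V) (A : V ≃ₗ[K] V) (y : V) :
    affinePermAt a A y = a + A (y - a) :=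
  rfl

theorem affinePermAt_apply_eq_self_iff {a y : V} {A : V ≃ₗ[K] V} :
    affinePermAt a A y = y ↔ A (y - a) = y - a := by
  rw [affinePermAt_apply, eq_sub_iff_add_eq']

end Affine

section AffineGroup

variable {d : ℕ}

theorem isAffinePerm_affinePermAt (a : Fin d → ZMod 2)
    (A : (Fin d → ZMod 2) ≃ₗ[ZMod 2] (Fin d → ZMod 2)) : IsAffinePerm (affinePermAt a A) :=
  ⟨A, a - A a, fun y => by rw [affinePermAt_apply, map_sub]; abel⟩

theorem IsAffinePerm.exists_eq_affinePermAt {g : Equiv.Perm (Fin d → ZMod 2)} (hg : IsAffinePerm g)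
    {a : Fin d → ZMod 2} (ha : g a = a) :
    ∃ A : (Fin d → ZMod 2) ≃ₗ[ZMod 2] (Fin d → ZMod 2), g = affinePermAt a A := by
  obtain ⟨A, t, hAt⟩ := hg
  have hta : A a + t = a := (hAt a).symm.trans ha
  refine ⟨A, Equiv.ext fun y => ?_⟩
  rw [affinePermAt_apply, hAt, map_sub]
  linear_combination (norm := module) hta

theorem IsAffinePerm.map_add_add {g : Equiv.Perm (Fin d → ZMod 2)} (hg : IsAffinePerm g)
    (a b c : Fin d → ZMod 2) : g (a + b + c) = g a + g b + g c := by
  obtain ⟨A, t, hAt⟩ := hg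
  simp only [hAt, map_add]
  linear_combination (norm := module) -ZModModule.add_self t

theorem exists_isAffinePerm_fixing_moving {a b c x : Fin d → ZMod 2} (hab : a ≠ b)
    (hx : x - a ∉ span (ZMod 2) {b - a, c - a}) :
    ∃ g, IsAffinePerm g ∧ g a = a ∧ g b = b ∧ g c = c ∧ g x ≠ x := by
  obtain ⟨A, hA, hAx⟩ :=
    exists_linearEquiv_fixing_add_of_notMem (subset_span (Set.mem_insert _ _)) hx
  refine ⟨affinePermAt a A, isAffinePerm_affinePermAt a A, ?_⟩
  simp only [ne_eq, affinePermAt_apply_eq_self_iff]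
  refine ⟨by simp, hA _ (subset_span (by simp)), hA _ (subset_span (by simp)), ?_⟩
  rw [hAx, add_eq_left, sub_eq_zero]
  exact hab.symm

end AffineGroup

theorem card_stabilizer_le_of_forall_fixes {G : Subgroup (Equiv.Perm (Fin 4 → ZMod 2))}
    (haff : ∀ g ∈ G, IsAffinePerm g) {a b c x : Fin 4 → ZMod 2} (hab : a ≠ b) (hac : a ≠ c)
    (hbc : b ≠ c) (hx : x - a ∉ span (ZMod 2) {b - a, c - a})
    (hfix : ∀ g ∈ G, g a = a → g b = b → g c = c → g x = x) :
    Nat.card (MulAction.stabilizer G (a, b, c)) ≤ 8 := by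
  set W := span (ZMod 2) {x - a, b - a, c - a} with hWdef
  have hW : finrank (ZMod 2) W = 3 := by
    rw [hWdef, span_insert, sup_comm, finrank_sup_span_singleton hx,
      finrank_span_pair_zmod_two (sub_ne_zero.2 hab.symm) (sub_ne_zero.2 hac.symm)
        (by simpa using hbc)]
  have hlin : ∀ g : MulAction.stabilizer G (a, b, c), ∃ A : (Fin 4 → ZMod 2) ≃ₗ[ZMod 2] _,
      (g : Equiv.Perm (Fin 4 → ZMod 2)) = affinePermAt a A ∧ ∀ w ∈ W, A w = w := by
    rintro ⟨g, hg⟩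
    obtain ⟨hga, hgb, hgc⟩ : g.1 a = a ∧ g.1 b = b ∧ g.1 c = c := by
      simpa [MulAction.mem_stabilizer_iff, Prod.ext_iff, Subgroup.smul_def,
        Equiv.Perm.smul_def] using hg
    have hgx := hfix g g.2 hga hgb hgc
    obtain ⟨A, hgA⟩ := (haff g g.2).exists_eq_affinePermAt hga
    rw [hgA, affinePermAt_apply_eq_self_iff] at hgb hgc hgx
    refine ⟨A, hgA, fun w hw => LinearMap.eqOn_span (f := A.toLinearMap) (g := .id) ?_ hw⟩
    simp [Set.EqOn, hgb, hgc, hgx]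
  choose A hAg hAW using hlin
  have : Finite ((Fin 4 → ZMod 2) ≃ₗ[ZMod 2] (Fin 4 → ZMod 2)) :=
    Finite.of_injective _ DFunLike.coe_injective
  calc Nat.card (MulAction.stabilizer G (a, b, c))
      ≤ Nat.card {A : (Fin 4 → ZMod 2) ≃ₗ[ZMod 2] _ // ∀ w ∈ W, A w = w} :=
        Nat.card_le_card_of_injective (fun g => ⟨A g, hAW g⟩) fun g h hgh =>
          Subtype.ext (Subtype.ext (by rw [hAg, hAg, (Subtype.mk.inj hgh : A g = A h)]))
    _ ≤ Nat.card (Fin 4 → ZMod 2) - Nat.card W := card_linearEquiv_fixing_le (by simp [hW])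
    _ = 8 := by simp [Module.natCard_eq_pow_finrank (K := ZMod 2), hW]

theorem exists_fixing_moving_of_card_eq {G : Subgroup (Equiv.Perm (Fin 4 → ZMod 2))}
    (haff : ∀ g ∈ G, IsAffinePerm g) (hcard : Nat.card G = 40320) {a b c x : Fin 4 → ZMod 2}
    (hab : a ≠ b) (hac : a ≠ c) (hbc : b ≠ c) (hx : x - a ∉ span (ZMod 2) {b - a, c - a}) :
    ∃ g ∈ G, g a = a ∧ g b = b ∧ g c = c ∧ g x ≠ x := by
  by_contra! hfix
  have hstab := card_stabilizer_le_of_forall_fixes haff hab hac hbc hx hfix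
  have horbit : (MulAction.orbit G (a, b, c)).ncard ≤ 4096 := by
    simpa [Nat.card_prod] using Set.ncard_le_card (MulAction.orbit G (a, b, c))
  have horbit_stab := (MulAction.stabilizer G (a, b, c)).card_mul_index
  rw [MulAction.index_stabilizer, hcard] at horbit_stab
  nlinarith

theorem stmt14_general (d : ℕ) (G : Subgroup (Equiv.Perm (Fin d → ZMod 2)))
    (haff : ∀ g ∈ G, IsAffinePerm g)
    (hG : (∀ π : Equiv.Perm (Fin d → ZMod 2), IsAffinePerm π → π ∈ G) ∨
      (d = 4 ∧ (∀ t : Fin d → ZMod 2, Equiv.addLeft t ∈ G) ∧ Nat.card G = 40320)) :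
    ∀ a b c : Fin d → ZMod 2, a ≠ b → a ≠ c → b ≠ c →
      {x : Fin d → ZMod 2 | ∀ g ∈ G, g a = a → g b = b → g c = c → g x = x}
        = {a, b, c, a + b + c} := by
  intro a b c hab hac hbc
  ext x
  simp only [Set.mem_ofPred_eq, Set.mem_insert_iff, Set.mem_singleton_iff]
  constructor
  · intro hx
    rw [← sub_mem_span_pair_sub_iff]
    by_contra hspan
    obtain ⟨g, hgG, hga, hgb, hgc, hgx⟩ : ∃ g ∈ G, g a = a ∧ g b = b ∧ g c = c ∧ g x ≠ x := by
      rcases hG with hAGL | ⟨rfl, -, hcard⟩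
      · obtain ⟨g, hg, hfixmove⟩ := exists_isAffinePerm_fixing_moving hab hspan
        exact ⟨g, hAGL g hg, hfixmove⟩
      · exact exists_fixing_moving_of_card_eq haff hcard hab hac hbc hspan
    exact hgx (hx g hgG hga hgb hgc)
  · rintro (rfl | rfl | rfl | rfl) g hg ha hb hc
    · exact ha
    · exact hb
    · exact hc
    · rw [(haff g hg).map_add_add, ha, hb, hc]

/-- for `G = AGL(d,2)` (`d ≥ 2`), or `G = Z₂⁴⋅A₇ < AGL(4,2)`, acting on
`AG(d,2)`, the pointwise stabilizer of three distinct points `a, b, c` has exactly the four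
fixed points `a, b, c, a+b+c` (the fourth point of the affine plane they span). -/
theorem stmt14 (d : ℕ) (hd : 2 ≤ d) (G : Subgroup (Equiv.Perm (Fin d → ZMod 2)))
    (haff : ∀ g ∈ G, IsAffinePerm g)
    (hG : (∀ π : Equiv.Perm (Fin d → ZMod 2), IsAffinePerm π → π ∈ G) ∨
      (d = 4 ∧ (∀ t : Fin d → ZMod 2, Equiv.addLeft t ∈ G) ∧ Nat.card G = 40320)) :
    ∀ a b c : Fin d → ZMod 2, a ≠ b → a ≠ c → b ≠ c →
      {x : Fin d → ZMod 2 | ∀ g ∈ G, g a = a → g b = b → g c = c → g x = x}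
        = {a, b, c, a + b + c} :=
  stmt14_general d G haff hG
end

section
/- Let G = AGL(d,2) with d ≥ 3, acting on the points of AG(d,2). For any three distinct points 0, 1, c with c' the fourth point of the plane they span, the stabilizer G(0,1,c) acts transitively on AG(d,2) \ {0, 1, c, c'}. -/
open Submodule

theorem LinearIndependent.exists_linearEquiv_apply_eq {K V ι : Type*} [Field K] [AddCommGroup V]
    [Module K V] [FiniteDimensional K V] {v w : ι → V}
    (hv : LinearIndependent K v) (hw : LinearIndependent K w) :
    ∃ F : V ≃ₗ[K] V, ∀ i, F (v i) = w i := by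
  obtain ⟨F, hF⟩ := exists_linearEquiv_restrict_eq
    ((Module.Basis.span hv).equiv (Module.Basis.span hw) (Equiv.refl ι))
  refine ⟨F, fun i => ?_⟩
  have h := hF (Module.Basis.span hv i)
  rw [Module.Basis.equiv_apply, Module.Basis.span_apply, Module.Basis.span_apply] at h
  exact h.symm

namespace ZModModule

variable {V : Type*} [AddCommGroup V] [Module (ZMod 2) V]

lemma smul_eq_zero_or_eq_self (s : ZMod 2) (v : V) : s • v = 0 ∨ s • v = v := by
  fin_cases s
  exacts [Or.inl (zero_smul _ v), Or.inr (one_smul _ v)]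

lemma mem_span_pair_iff {u v z : V} :
    z ∈ span (ZMod 2) {u, v} ↔ z ∈ ({0, u, v, u + v} : Set V) := by
  rw [mem_span_pair]
  constructor
  · rintro ⟨s, t, rfl⟩
    rcases smul_eq_zero_or_eq_self s u with hs | hs <;>
      rcases smul_eq_zero_or_eq_self t v with ht | ht <;> simp [hs, ht]
  · rintro (rfl | rfl | rfl | rfl)
    exacts [⟨0, 0, by simp⟩, ⟨1, 0, by simp⟩, ⟨0, 1, by simp⟩, ⟨1, 1, by simp⟩]

lemma linearIndependent_pair {u v : V} (hu : u ≠ 0) (hv : v ≠ 0) (huv : u ≠ v) :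
    LinearIndependent (ZMod 2) ![u, v] := by
  refine linearIndependent_fin2.mpr ⟨hv, fun s => ?_⟩
  rcases smul_eq_zero_or_eq_self s v with h | h <;>
    simp only [Matrix.cons_val_one, Matrix.cons_val_zero, h] <;> tauto

lemma linearIndependent_triple {x u v : V} (hu : u ≠ 0) (hv : v ≠ 0) (huv : u ≠ v)
    (hx : x ∉ ({0, u, v, u + v} : Set V)) : LinearIndependent (ZMod 2) ![x, u, v] := by
  refine linearIndependent_finCons.mpr ⟨linearIndependent_pair hu hv huv, ?_⟩
  rwa [Matrix.range_cons_cons_empty, mem_span_pair_iff]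

lemma linearIndependent_add_left_of_notMem {a b c x : V} (hab : a ≠ b) (hac : a ≠ c)
    (hbc : b ≠ c) (hx : x ∉ ({a, b, c, a + b + c} : Set V)) :
    LinearIndependent (ZMod 2) ![a + x, a + b, a + c] := by
  have hplane :
      ({0, a + b, a + c, (a + b) + (a + c)} : Set V) = (a + ·) '' {a, b, c, a + b + c} := by
    rw [add_comm a b, add_add_add_cancel]
    simp [Set.image_insert_eq, add_self, ← add_assoc, add_comm b a]
  refine linearIndependent_triple ?_ ?_ ((add_right_injective a).ne hbc) ?_
  · rwa [← sub_eq_add, sub_ne_zero]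
  · rwa [← sub_eq_add, sub_ne_zero]
  · rwa [hplane, (add_right_injective a).mem_set_image]

end ZModModule

theorem stmt15_general (d : ℕ) :
    ∀ a b c : Fin d → ZMod 2, a ≠ b → a ≠ c → b ≠ c →
      ∀ x y : Fin d → ZMod 2,
        x ∉ ({a, b, c, a + b + c} : Set (Fin d → ZMod 2)) →
        y ∉ ({a, b, c, a + b + c} : Set (Fin d → ZMod 2)) →
        ∃ g : Equiv.Perm (Fin d → ZMod 2), IsAffinePerm g ∧
          g a = a ∧ g b = b ∧ g c = c ∧ g x = y := by
  intro a b c hab hac hbc x y hx hy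
  have hxa := ZModModule.linearIndependent_add_left_of_notMem hab hac hbc hx
  have hya := ZModModule.linearIndependent_add_left_of_notMem hab hac hbc hy
  obtain ⟨F, hF⟩ := hxa.exists_linearEquiv_apply_eq hya
  have hcancel (z : Fin d → ZMod 2) : a + (a + z) = z := by
    rw [← add_assoc, ZModModule.add_self, zero_add]
  refine ⟨(Equiv.addLeft a).trans (F.toEquiv.trans (Equiv.addLeft a)),
    ⟨F, a + F a, fun z => ?_⟩, ?_, ?_, ?_, ?_⟩
  all_goals simp only [Equiv.trans_apply, Equiv.coe_addLeft, LinearEquiv.coe_toEquiv]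
  · rw [map_add]; abel
  · rw [ZModModule.add_self, map_zero, add_zero]
  · exact (congrArg (a + ·) (hF 1)).trans (hcancel b)
  · exact (congrArg (a + ·) (hF 2)).trans (hcancel c)
  · exact (congrArg (a + ·) (hF 0)).trans (hcancel y)

/-- for `AGL(d,2)` with `d ≥ 3`, the stabilizer of three distinct points
`a, b, c` acts transitively on the complement of `{a, b, c, a+b+c}` in `AG(d,2)`. -/
theorem stmt15 (d : ℕ) (hd : 3 ≤ d) :
    ∀ a b c : Fin d → ZMod 2, a ≠ b → a ≠ c → b ≠ c →
      ∀ x y : Fin d → ZMod 2,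
        x ∉ ({a, b, c, a + b + c} : Set (Fin d → ZMod 2)) →
        y ∉ ({a, b, c, a + b + c} : Set (Fin d → ZMod 2)) →
        ∃ g : Equiv.Perm (Fin d → ZMod 2), IsAffinePerm g ∧
          g a = a ∧ g b = b ∧ g c = c ∧ g x = y :=
  stmt15_general d
end

section
/- Let Γ be a G-symmetric graph with G-partition 𝓑 into v+1 = b+1 blocks of size v with complete quotient, G(B)^B 2-transitive, t ≥ 2 and k = 2 < v. Then no such graph exists; that is, the conditions t ≥ 2 and k = 2 are incompatible. -/
open scoped Pointwise

/-!
Fix a block `B₀`. As the stabiliser of `B₀` is 2-transitive on `B₀` and `k = 2`, every pair of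
points of `B₀` is the trace `Γ(C) ∩ B₀` of one of the `v` other blocks `C`, so `v.choose 2 ≤ v`
and `v = 3`. Write `B₀ = {a, b, c}` and let `B₁`, `B₂` be the blocks with traces `{a, b}` and
`{a, c}`. Since `t ≥ 2 = k`, both points `p, q` of `Γ(B₀) ∩ B₁` are neighbours of `a`, and
arc-transitivity gives `g` with `g a = a` and `g p = q`. Such a `g` fixes `B₀` and `B₁`, hence
fixes `{a, b}` and then `B₀` pointwise, hence fixes `B₂`, the traces in `B₀` being distinct. So
`Γ(B₂) ∩ B₁` is a `g`-invariant pair in the 3-set `B₁`; it must contain both or neither of `p`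
and `q`, which forces it to be `{p, q} = Γ(B₀) ∩ B₁`, and `𝓓(B₁)` would have a repeated block.
-/

theorem Nat.eq_three_of_choose_two_le_self {n : ℕ} (h2 : 2 < n) (h : n.choose 2 ≤ n) :
    n = 3 := by
  obtain ⟨m, rfl⟩ : ∃ m, n = m + 1 := ⟨n - 1, by omega⟩
  have hsucc : (m + 1).choose 2 = m + m.choose 2 := by
    rw [Nat.choose_succ_succ', Nat.choose_one_right]
  by_contra hm
  have h3 : Nat.choose 3 2 ≤ m.choose 2 := Nat.choose_le_choose 2 (by omega)
  rw [show Nat.choose 3 2 = 3 from rfl] at h3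
  omega

theorem Set.ncard_choose_two_le_of_forall_pair {α V : Type*} {B : Set V} {s : Set α}
    (f : α → Set V) (hB : B.Finite) (hs : s.Finite)
    (hf : ∀ x ∈ B, ∀ y ∈ B, x ≠ y → ∃ c ∈ s, f c = {x, y}) :
    B.ncard.choose 2 ≤ s.ncard := by
  classical
  calc B.ncard.choose 2 = ((hB.toFinset.powersetCard 2).image (↑)).card := by
        rw [Finset.card_image_of_injective _ Finset.coe_injective, Finset.card_powersetCard,
          Set.ncard_eq_toFinset_card B hB]
    _ ≤ hs.toFinset.card := Finset.card_le_card_of_surjOn f ?_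
    _ = s.ncard := (Set.ncard_eq_toFinset_card s hs).symm
  intro T hT
  obtain ⟨U, hU, rfl⟩ := Finset.mem_image.mp hT
  obtain ⟨hUB, hU⟩ := Finset.mem_powersetCard.mp hU
  obtain ⟨x, y, hxy, rfl⟩ := Finset.card_eq_two.mp hU
  obtain ⟨c, hc, hfc⟩ := hf x (by simpa using hUB (by simp)) y (by simpa using hUB (by simp)) hxy
  exact ⟨c, by simpa using hc, by simp [hfc]⟩

theorem smul_eq_self_of_forall_ne {G α : Type*} [Group G] [MulAction G α] {g : G} {s : Set α}
    {x : α} (hs : g • s = s) (hx : x ∈ s) (h : ∀ y ∈ s, y ≠ x → g • y = y) : g • x = x := by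
  by_contra hne
  have hgx : g • x ∈ s := hs ▸ Set.smul_mem_smul_set hx
  exact hne (smul_left_cancel g (h _ hgx hne))

theorem smul_set_eq_self_of_forall_mem {G α : Type*} [Group G] [MulAction G α] {g : G}
    {s : Set α} (h : ∀ x ∈ s, g • x = x) : g • s = s := by
  rw [← Set.image_smul]
  exact (Set.image_congr h).trans (Set.image_id s)

theorem Set.eq_pair_of_mem_iff_mem {V : Type*} {B S : Set V} {p q : V} (hB : B.ncard = 3)
    (hSB : S ⊆ B) (hS : S.ncard = 2) (hp : p ∈ B) (hq : q ∈ B) (hpq : p ≠ q)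
    (hiff : p ∈ S ↔ q ∈ S) : S = {p, q} := by
  have hSfin : S.Finite := Set.finite_of_ncard_ne_zero (by omega)
  by_cases hpS : p ∈ S
  · refine (Set.eq_of_subset_of_ncard_le ?_ ?_ hSfin).symm
    · exact Set.insert_subset hpS (Set.singleton_subset_iff.mpr (hiff.mp hpS))
    · rw [hS, Set.ncard_pair hpq]
  · have hsub : S ⊆ B \ {p, q} := fun x hx ↦
      ⟨hSB hx, by rintro (rfl | rfl) <;> simp_all⟩
    have hdiff : (B \ {p, q}).ncard = 1 := by
      rw [Set.ncard_sdiff (Set.insert_subset hp (Set.singleton_subset_iff.mpr hq)), hB,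
        Set.ncard_pair hpq]
    have := Set.ncard_le_ncard hsub (Set.finite_of_ncard_ne_zero (by omega))
    omega

theorem IsGPartition.smul_eq_self {V G : Type*} [Group G] [MulAction G V] {𝓑 : Set (Set V)}
    (h𝓑 : IsGPartition G 𝓑) {B : Set V} (hB : B ∈ 𝓑) {g : G} {x : V} (hx : x ∈ B)
    (hgx : g • x ∈ B) : g • B = B :=
  Setoid.eq_of_mem_eqv_class h𝓑.1.2 (h𝓑.2 g B hB) (Set.smul_mem_smul_set hx) hB hgx

/-- For blocks `B ≠ C` this is `Γ(C) ∩ B`, a block of the design `𝓓(B)`. -/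
def blockTrace {V : Type*} (Γ : SimpleGraph V) (B C : Set V) : Set V :=
  {x ∈ B | ∃ y ∈ C, Γ.Adj x y}

section blockTrace

variable {V G : Type*} [Group G] [MulAction G V] {Γ : SimpleGraph V}

theorem blockTrace_subset (B C : Set V) : blockTrace Γ B C ⊆ B := Set.sep_subset _ _

theorem smul_blockTrace (hΓ : ∀ (g : G) (x y : V), Γ.Adj x y → Γ.Adj (g • x) (g • y))
    (g : G) (B C : Set V) : blockTrace Γ (g • B) (g • C) = g • blockTrace Γ B C := by
  ext z
  simp only [blockTrace, Set.mem_ofPred_eq, Set.mem_smul_set_iff_inv_smul_mem]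
  constructor
  · rintro ⟨hzB, y, hyC, hzy⟩
    exact ⟨hzB, g⁻¹ • y, hyC, hΓ g⁻¹ _ _ hzy⟩
  · rintro ⟨hzB, y, hyC, hzy⟩
    exact ⟨hzB, g • y, by simpa using hyC, by simpa using hΓ g _ _ hzy⟩

theorem neighborSet_inter_eq_blockTrace {B C : Set V} {x : V} {t : ℕ}
    (hx : x ∈ blockTrace Γ B C)
    (ht : (Γ.neighborSet x ∩ C).ncard = 0 ∨ (Γ.neighborSet x ∩ C).ncard = t) (ht2 : 2 ≤ t)
    (hk : (blockTrace Γ C B).ncard = 2) : Γ.neighborSet x ∩ C = blockTrace Γ C B := by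
  have hsub : Γ.neighborSet x ∩ C ⊆ blockTrace Γ C B := fun y ⟨hxy, hy⟩ ↦
    ⟨hy, x, hx.1, hxy.symm⟩
  have hfin : (blockTrace Γ C B).Finite := Set.finite_of_ncard_ne_zero (by omega)
  obtain ⟨-, y, hy, hxy⟩ := hx
  have hne : (Γ.neighborSet x ∩ C).ncard ≠ 0 :=
    (Set.ncard_pos (hfin.subset hsub)).mpr ⟨y, hxy, hy⟩ |>.ne'
  exact Set.eq_of_subset_of_ncard_le hsub (by omega) hfin

theorem blockTrace_eq_pair_of_smul_eq_self
    (hΓ : ∀ (g : G) (x y : V), Γ.Adj x y → Γ.Adj (g • x) (g • y)) {B C : Set V}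
    (hB : B.ncard = 3) (hk : (blockTrace Γ B C).ncard = 2) {g : G} (hgB : g • B = B)
    (hgC : g • C = C) {p q : V} (hp : p ∈ B) (hq : q ∈ B) (hpq : p ≠ q) (hgp : g • p = q) :
    blockTrace Γ B C = {p, q} := by
  have hT : g • blockTrace Γ B C = blockTrace Γ B C := by
    rw [← smul_blockTrace hΓ, hgB, hgC]
  exact Set.eq_pair_of_mem_iff_mem hB (blockTrace_subset B C) hk hp hq hpq
    (Set.smul_mem_smul_set_iff.symm.trans (by rw [hT, hgp]))

variable {𝓑 : Set (Set V)}

theorem exists_blockTrace_eq_pair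
    (hΓ : ∀ (g : G) (x y : V), Γ.Adj x y → Γ.Adj (g • x) (g • y)) (h𝓑 : IsGPartition G 𝓑)
    {B C : Set V}
    (h2trans : ∀ x₁ ∈ B, ∀ y₁ ∈ B, ∀ x₂ ∈ B, ∀ y₂ ∈ B, x₁ ≠ y₁ → x₂ ≠ y₂ →
      ∃ g : G, g • B = B ∧ g • x₁ = x₂ ∧ g • y₁ = y₂)
    (hC : C ∈ 𝓑) (hCB : C ≠ B) (hk : (blockTrace Γ B C).ncard = 2)
    {x y : V} (hx : x ∈ B) (hy : y ∈ B) (hxy : x ≠ y) :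
    ∃ D ∈ 𝓑, D ≠ B ∧ blockTrace Γ B D = {x, y} := by
  obtain ⟨u, w, huw, htr⟩ := Set.ncard_eq_two.mp hk
  have hu : u ∈ B := blockTrace_subset B C (show u ∈ blockTrace Γ B C by simp [htr])
  have hw : w ∈ B := blockTrace_subset B C (show w ∈ blockTrace Γ B C by simp [htr])
  obtain ⟨g, hgB, hgu, hgw⟩ := h2trans u hu w hw x hx y hy huw hxy
  refine ⟨g • C, h𝓑.2 g C hC, fun h ↦ hCB (smul_left_cancel g (h.trans hgB.symm)), ?_⟩
  calc blockTrace Γ B (g • C) = blockTrace Γ (g • B) (g • C) := by rw [hgB]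
    _ = g • blockTrace Γ B C := smul_blockTrace hΓ g B C
    _ = {x, y} := by rw [htr, Set.smul_set_insert, Set.smul_set_singleton, hgu, hgw]

/-- Every pair of points of `B` is the trace of one of the `v` other blocks, so
`v.choose 2 ≤ v`. -/
theorem blockSize_eq_three
    (hΓ : ∀ (g : G) (x y : V), Γ.Adj x y → Γ.Adj (g • x) (g • y)) (h𝓑 : IsGPartition G 𝓑)
    {B C : Set V} {v : ℕ} (hv : 2 < v) (hcard : 𝓑.ncard = v + 1) (hB : B ∈ 𝓑)
    (hsize : B.ncard = v)
    (h2trans : ∀ x₁ ∈ B, ∀ y₁ ∈ B, ∀ x₂ ∈ B, ∀ y₂ ∈ B, x₁ ≠ y₁ → x₂ ≠ y₂ →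
      ∃ g : G, g • B = B ∧ g • x₁ = x₂ ∧ g • y₁ = y₂)
    (hC : C ∈ 𝓑) (hCB : C ≠ B) (hk : (blockTrace Γ B C).ncard = 2) : v = 3 := by
  refine Nat.eq_three_of_choose_two_le_self hv ?_
  have hcount := Set.ncard_choose_two_le_of_forall_pair (blockTrace Γ B) (s := 𝓑 \ {B})
    (Set.finite_of_ncard_ne_zero (by omega)) ((Set.finite_of_ncard_ne_zero (by omega)).sdiff)
    fun x hx y hy hxy ↦ (exists_blockTrace_eq_pair hΓ h𝓑 h2trans hC hCB hk hx hy hxy).imp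
      fun D ⟨hD, hDB, h⟩ ↦ ⟨⟨hD, hDB⟩, h⟩
  rwa [hsize, Set.ncard_sdiff_singleton_of_mem hB, hcard, Nat.add_sub_cancel] at hcount

theorem smul_eq_of_smul_blockTrace
    (hΓ : ∀ (g : G) (x y : V), Γ.Adj x y → Γ.Adj (g • x) (g • y)) (h𝓑 : IsGPartition G 𝓑)
    {B C D : Set V}
    (hnorep : ∀ B₁ ∈ 𝓑, ∀ B₂ ∈ 𝓑, B₁ ≠ B → B₂ ≠ B →
      blockTrace Γ B B₁ = blockTrace Γ B B₂ → B₁ = B₂)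
    (hC : C ∈ 𝓑) (hCB : C ≠ B) (hD : D ∈ 𝓑) (hDB : D ≠ B) {g : G} (hgB : g • B = B)
    (h : g • blockTrace Γ B C = blockTrace Γ B D) : g • C = D := by
  refine hnorep _ (h𝓑.2 g C hC) D hD (fun h' ↦ hCB (smul_left_cancel g (h'.trans hgB.symm)))
    hDB ?_
  rw [← h, ← smul_blockTrace hΓ, hgB]

theorem smul_eq_self_of_forall_mem_smul_eq
    (hΓ : ∀ (g : G) (x y : V), Γ.Adj x y → Γ.Adj (g • x) (g • y)) (h𝓑 : IsGPartition G 𝓑)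
    {B C : Set V}
    (hnorep : ∀ B₁ ∈ 𝓑, ∀ B₂ ∈ 𝓑, B₁ ≠ B → B₂ ≠ B →
      blockTrace Γ B B₁ = blockTrace Γ B B₂ → B₁ = B₂)
    (hC : C ∈ 𝓑) (hCB : C ≠ B) {g : G} (hgB : g • B = B) (hfix : ∀ x ∈ B, g • x = x) :
    g • C = C :=
  smul_eq_of_smul_blockTrace hΓ h𝓑 hnorep hC hCB hC hCB hgB
    (smul_set_eq_self_of_forall_mem fun x hx ↦ hfix x (blockTrace_subset B C hx))

end blockTrace

theorem stmt17_general {V G : Type*} [Group G] [MulAction G V]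
    (Γ : SimpleGraph V) (𝓑 : Set (Set V))
    (hsym : IsGSymmetric (G := G) Γ) (hpart : IsGPartition G 𝓑)
    (v t : ℕ) (hv2 : 2 < v) (ht2 : 2 ≤ t)
    (hcard : 𝓑.ncard = v + 1)
    (hsize : ∀ B ∈ 𝓑, B.ncard = v)
    (h2trans : ∀ B ∈ 𝓑, ∀ x₁ ∈ B, ∀ y₁ ∈ B, ∀ x₂ ∈ B, ∀ y₂ ∈ B, x₁ ≠ y₁ → x₂ ≠ y₂ →
      ∃ g : G, g • B = B ∧ g • x₁ = x₂ ∧ g • y₁ = y₂)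
    (hnorep : ∀ B ∈ 𝓑, ∀ B₁ ∈ 𝓑, ∀ B₂ ∈ 𝓑, B₁ ≠ B → B₂ ≠ B →
      {x ∈ B | ∃ y ∈ B₁, Γ.Adj x y} = {x ∈ B | ∃ y ∈ B₂, Γ.Adj x y} → B₁ = B₂)
    (ht : ∀ B ∈ 𝓑, ∀ B' ∈ 𝓑, B ≠ B' → ∀ x ∈ B,
      (Γ.neighborSet x ∩ B').ncard = 0 ∨ (Γ.neighborSet x ∩ B').ncard = t)
    (hk : ∀ B ∈ 𝓑, ∀ B' ∈ 𝓑, B ≠ B' → {x ∈ B | ∃ y ∈ B', Γ.Adj x y}.ncard = 2) :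
    False := by
  obtain ⟨hΓ, -, harc⟩ := hsym
  have hk : ∀ B ∈ 𝓑, ∀ C ∈ 𝓑, B ≠ C → (blockTrace Γ B C).ncard = 2 := hk
  obtain ⟨B₀, hB₀⟩ : 𝓑.Nonempty := Set.nonempty_of_ncard_ne_zero (by omega)
  obtain ⟨C, hC, hCB₀⟩ := Set.exists_ne_of_one_lt_ncard (s := 𝓑) (by omega) B₀
  obtain rfl : v = 3 := blockSize_eq_three hΓ hpart hv2 hcard hB₀ (hsize B₀ hB₀)
    (h2trans B₀ hB₀) hC hCB₀ (hk B₀ hB₀ C hC hCB₀.symm)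
  obtain ⟨a, b, c, hab, hac, hbc, hB₀abc⟩ := Set.ncard_eq_three.mp (hsize B₀ hB₀)
  obtain ⟨ha, hb, hc⟩ : a ∈ B₀ ∧ b ∈ B₀ ∧ c ∈ B₀ := by simp [hB₀abc]
  have pair_mem {x y : V} (hx : x ∈ B₀) (hy : y ∈ B₀) :=
    exists_blockTrace_eq_pair hΓ hpart (h2trans B₀ hB₀) hC hCB₀ (hk B₀ hB₀ C hC hCB₀.symm) hx hy
  obtain ⟨B₁, hB₁, hB₁₀, htr₁⟩ := pair_mem ha hb hab
  obtain ⟨B₂, hB₂, hB₂₀, htr₂⟩ := pair_mem ha hc hac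
  have hB₂₁ : B₂ ≠ B₁ := fun h ↦ by
    have hb₂ : b ∈ blockTrace Γ B₀ B₂ := by simp [h, htr₁]
    simp [htr₂, hab.symm, hbc] at hb₂
  obtain ⟨p, q, hpq, hpq₁⟩ := Set.ncard_eq_two.mp (hk B₁ hB₁ B₀ hB₀ hB₁₀)
  have hN : Γ.neighborSet a ∩ B₁ = {p, q} := hpq₁ ▸ neighborSet_inter_eq_blockTrace
    (by simp [htr₁]) (ht B₀ hB₀ B₁ hB₁ hB₁₀.symm a ha) ht2 (hk B₁ hB₁ B₀ hB₀ hB₁₀)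
  obtain ⟨hp, hq⟩ : p ∈ Γ.neighborSet a ∩ B₁ ∧ q ∈ Γ.neighborSet a ∩ B₁ := by simp [hN]
  obtain ⟨g, hga, hgp⟩ := harc a p a q hp.1 hq.1
  have hgB₀ : g • B₀ = B₀ := hpart.smul_eq_self hB₀ ha (by rwa [hga])
  have hgB₁ : g • B₁ = B₁ := hpart.smul_eq_self hB₁ hp.2 (hgp ▸ hq.2)
  have hgb : g • b = b := smul_eq_self_of_forall_ne (s := {a, b})
    (by rw [← htr₁, ← smul_blockTrace hΓ, hgB₀, hgB₁]) (by simp) (by simp [hga])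
  have hgc : g • c = c := smul_eq_self_of_forall_ne hgB₀ hc (by simp [hB₀abc, hga, hgb])
  have hgB₂ : g • B₂ = B₂ := smul_eq_self_of_forall_mem_smul_eq hΓ hpart (hnorep B₀ hB₀) hB₂
    hB₂₀ hgB₀ (by simp [hB₀abc, hga, hgb, hgc])
  exact hB₂₀ <| hnorep B₁ hB₁ B₂ hB₂ B₀ hB₀ hB₂₁ hB₁₀.symm <|
    (blockTrace_eq_pair_of_smul_eq_self hΓ (hsize B₁ hB₁) (hk B₁ hB₁ B₂ hB₂ hB₂₁.symm)
      hgB₁ hgB₂ hp.2 hq.2 hpq hgp).trans hpq₁.symm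

/-- with complete quotient, `v = b` blocks of size `v`, `G(B)^B` 2-transitive,
`𝓓(B)` a symmetric 2-design without repeated blocks, `t ≥ 2` and `k = 2 < v` are
incompatible: no such graph exists. -/
theorem stmt17 {V G : Type*} [Fintype V] [Group G] [MulAction G V]
    (Γ : SimpleGraph V) (𝓑 : Set (Set V))
    (hsym : IsGSymmetric (G := G) Γ) (hpart : IsGPartition G 𝓑)
    (v t : ℕ) (hv2 : 2 < v) (ht2 : 2 ≤ t)
    (hcomplete : ∀ B ∈ 𝓑, ∀ B' ∈ 𝓑, B ≠ B' → BlockAdj Γ B B')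
    (hcard : 𝓑.ncard = v + 1)
    (hsize : ∀ B ∈ 𝓑, B.ncard = v)
    (h2trans : ∀ B ∈ 𝓑, ∀ x₁ ∈ B, ∀ y₁ ∈ B, ∀ x₂ ∈ B, ∀ y₂ ∈ B, x₁ ≠ y₁ → x₂ ≠ y₂ →
      ∃ g : G, g • B = B ∧ g • x₁ = x₂ ∧ g • y₁ = y₂)
    (hnorep : ∀ B ∈ 𝓑, ∀ B₁ ∈ 𝓑, ∀ B₂ ∈ 𝓑, B₁ ≠ B → B₂ ≠ B →
      {x ∈ B | ∃ y ∈ B₁, Γ.Adj x y} = {x ∈ B | ∃ y ∈ B₂, Γ.Adj x y} → B₁ = B₂)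
    (ht : ∀ B ∈ 𝓑, ∀ B' ∈ 𝓑, B ≠ B' → ∀ x ∈ B,
      (Γ.neighborSet x ∩ B').ncard = 0 ∨ (Γ.neighborSet x ∩ B').ncard = t)
    (hk : ∀ B ∈ 𝓑, ∀ B' ∈ 𝓑, B ≠ B' → {x ∈ B | ∃ y ∈ B', Γ.Adj x y}.ncard = 2) :
    False :=
  stmt17_general Γ 𝓑 hsym hpart v t hv2 ht2 hcard hsize h2trans hnorep ht hk
end

section
/- Let (Γ, G, 𝓑) be a triple where Γ is G-symmetric, 𝓑 a G-partition with k = |Γ(B_i) ∩ B_j| ≥ 2 for adjacent blocks, and suppose G(B_i, B_j) acts transitively on the non-edges between X_{ji} = Γ(B_j) ∩ B_i and X_{ij} = Γ(B_i) ∩ B_j. Define the *-transform Γ* by joining x ∈ X_{ji} to exactly the vertices of X_{ij} not adjacent to x in Γ. Then Γ* is G-symmetric, 𝓑 is a G-partition for Γ* with the same quotient graph, the parameters satisfy v* = v, b* = b, k* = k, t* = k − t, and (Γ*)* = Γ. -/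
/-!
A vertex of `Γ(B') ∩ B` has `t < k` of the `k` vertices of `Γ(B) ∩ B'` as `Γ`-neighbours,
hence `k - t > 0` of them as `Γ*`-neighbours. So `Γ*` has the same sets `Γ(B') ∩ B`, hence the
same quotient graph, and complementing twice gives back `Γ`.
For arc-transitivity of `Γ*`, a `Γ`-arc at the tail of each `Γ*`-arc lets the arc-transitivity of
`Γ` move the two `Γ*`-arcs to a common tail and common pair of blocks; the transitivity of the
block stabiliser on non-edges then moves one onto the other.
-/

open scoped Pointwise

/-- The `*`-transform of `Γ` with respect to the partition `𝓑`: between two distinct blocks,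
the vertices meeting the other block are rejoined by the complementary bipartite graph. -/
def starTransform {V : Type*} (Γ : SimpleGraph V) (𝓑 : Set (Set V)) : SimpleGraph V where
  Adj x y := x ≠ y ∧ ¬ Γ.Adj x y ∧
    ∃ B ∈ 𝓑, ∃ B' ∈ 𝓑, B ≠ B' ∧ x ∈ B ∧ y ∈ B' ∧
      (∃ z ∈ B', Γ.Adj x z) ∧ (∃ w ∈ B, Γ.Adj y w)
  symm := ⟨by
    rintro x y ⟨hxy, hna, B, hB, B', hB', hne, hx, hy, h1, h2⟩
    exact ⟨hxy.symm, fun h => hna h.symm, B', hB', B, hB, hne.symm, hy, hx, h2, h1⟩⟩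
  loopless := ⟨fun x h => h.1 rfl⟩

def IsBlockNonEdgeTransitive {V : Type*} (G : Type*) [Group G] [MulAction G V]
    (Γ : SimpleGraph V) (𝓑 : Set (Set V)) : Prop :=
  ∀ B ∈ 𝓑, ∀ B' ∈ 𝓑, BlockAdj Γ B B' →
    ∀ x ∈ B, ∀ y ∈ B', ∀ x' ∈ B, ∀ y' ∈ B',
      (∃ z ∈ B', Γ.Adj x z) → (∃ w ∈ B, Γ.Adj y w) →
      (∃ z ∈ B', Γ.Adj x' z) → (∃ w ∈ B, Γ.Adj y' w) →
      ¬ Γ.Adj x y → ¬ Γ.Adj x' y' →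
      ∃ g : G, g • B = B ∧ g • B' = B' ∧ g • x = x' ∧ g • y = y'

section StarTransform

variable {V : Type*} {Γ : SimpleGraph V} {𝓑 : Set (Set V)} {B B' : Set V} {x y : V}

theorem BlockAdj.symm (h : BlockAdj Γ B B') : BlockAdj Γ B' B := by
  obtain ⟨hne, x, hx, y, hy, hxy⟩ := h
  exact ⟨hne.symm, y, hy, x, hx, hxy.symm⟩

theorem not_starTransform_adj_of_mem (hP : Setoid.IsPartition 𝓑) (hB : B ∈ 𝓑)
    (hx : x ∈ B) (hy : y ∈ B) : ¬ (starTransform Γ 𝓑).Adj x y := by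
  rintro ⟨-, -, C, hC, C', hC', hne, hxC, hyC', -⟩
  exact hne ((Setoid.eq_of_mem_eqv_class hP.2 hC hxC hB hx).trans
    (Setoid.eq_of_mem_eqv_class hP.2 hB hy hC' hyC'))

theorem starTransform_adj_iff (hP : Setoid.IsPartition 𝓑) (hB : B ∈ 𝓑) (hB' : B' ∈ 𝓑)
    (hne : B ≠ B') (hx : x ∈ B) (hy : y ∈ B') :
    (starTransform Γ 𝓑).Adj x y ↔
      ¬ Γ.Adj x y ∧ (∃ z ∈ B', Γ.Adj x z) ∧ (∃ w ∈ B, Γ.Adj y w) := by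
  constructor
  · rintro ⟨-, hxy, C, hC, C', hC', -, hxC, hyC', hxC', hyC⟩
    obtain rfl := Setoid.eq_of_mem_eqv_class hP.2 hC hxC hB hx
    obtain rfl := Setoid.eq_of_mem_eqv_class hP.2 hC' hyC' hB' hy
    exact ⟨hxy, hxC', hyC⟩
  · rintro ⟨hxy, hxB', hyB⟩
    refine ⟨?_, hxy, B, hB, B', hB', hne, hx, hy, hxB', hyB⟩
    rintro rfl
    exact hne (Setoid.eq_of_mem_eqv_class hP.2 hB hx hB' hy)

theorem starTransform_neighborSet_inter_eq_empty (hP : Setoid.IsPartition 𝓑) (hB : B ∈ 𝓑)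
    (hB' : B' ∈ 𝓑) (hne : B ≠ B') (hx : x ∈ B) (hxB' : ¬ ∃ z ∈ B', Γ.Adj x z) :
    (starTransform Γ 𝓑).neighborSet x ∩ B' = ∅ :=
  Set.eq_empty_of_forall_notMem fun _ ⟨hxy, hy⟩ =>
    hxB' ((starTransform_adj_iff hP hB hB' hne hx hy).1 hxy).2.1

theorem starTransform_neighborSet_inter (hP : Setoid.IsPartition 𝓑) (hB : B ∈ 𝓑)
    (hB' : B' ∈ 𝓑) (hne : B ≠ B') (hx : x ∈ B) (hxB' : ∃ z ∈ B', Γ.Adj x z) :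
    (starTransform Γ 𝓑).neighborSet x ∩ B' =
      {y ∈ B' | ∃ w ∈ B, Γ.Adj y w} \ (Γ.neighborSet x ∩ B') := by
  ext y
  simp only [Set.mem_inter_iff, SimpleGraph.mem_neighborSet, Set.mem_sdiff, Set.mem_ofPred_eq]
  constructor
  · rintro ⟨hxy, hy⟩
    obtain ⟨hnxy, -, hyB⟩ := (starTransform_adj_iff hP hB hB' hne hx hy).1 hxy
    exact ⟨⟨hy, hyB⟩, fun h => hnxy h.1⟩
  · rintro ⟨⟨hy, hyB⟩, hnxy⟩
    exact ⟨(starTransform_adj_iff hP hB hB' hne hx hy).2 ⟨fun h => hnxy ⟨h, hy⟩, hxB', hyB⟩, hy⟩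

theorem neighborSet_inter_subset_attached (hx : x ∈ B) :
    Γ.neighborSet x ∩ B' ⊆ {y ∈ B' | ∃ w ∈ B, Γ.Adj y w} :=
  fun _ ⟨hxy, hy⟩ => ⟨hy, x, hx, hxy.symm⟩

theorem ncard_starTransform_neighborSet_inter (hP : Setoid.IsPartition 𝓑) (hB : B ∈ 𝓑)
    (hB' : B' ∈ 𝓑) (hne : B ≠ B') (hx : x ∈ B) (hxB' : ∃ z ∈ B', Γ.Adj x z)
    (hfin : {y ∈ B' | ∃ w ∈ B, Γ.Adj y w}.Finite) :
    ((starTransform Γ 𝓑).neighborSet x ∩ B').ncard =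
      {y ∈ B' | ∃ w ∈ B, Γ.Adj y w}.ncard - (Γ.neighborSet x ∩ B').ncard := by
  have hsub := neighborSet_inter_subset_attached (Γ := Γ) (B' := B') hx
  rw [starTransform_neighborSet_inter hP hB hB' hne hx hxB', Set.ncard_sdiff hsub (hfin.subset hsub)]

theorem exists_starTransform_adj_iff (hP : Setoid.IsPartition 𝓑) (hB : B ∈ 𝓑)
    (hB' : B' ∈ 𝓑) (hne : B ≠ B') (hx : x ∈ B)
    (hfin : {y ∈ B' | ∃ w ∈ B, Γ.Adj y w}.Finite)
    (hlt : (Γ.neighborSet x ∩ B').ncard < {y ∈ B' | ∃ w ∈ B, Γ.Adj y w}.ncard) :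
    (∃ y ∈ B', (starTransform Γ 𝓑).Adj x y) ↔ ∃ y ∈ B', Γ.Adj x y := by
  refine ⟨fun ⟨y, hy, hxy⟩ => ((starTransform_adj_iff hP hB hB' hne hx hy).1 hxy).2.1,
    fun hxB' => ?_⟩
  have hpos : ((starTransform Γ 𝓑).neighborSet x ∩ B').ncard ≠ 0 := by
    rw [ncard_starTransform_neighborSet_inter hP hB hB' hne hx hxB' hfin]
    omega
  obtain ⟨y, hxy, hy⟩ := Set.nonempty_of_ncard_ne_zero hpos
  exact ⟨y, hy, hxy⟩

theorem ncard_starTransform_neighborSet_inter_eq_zero_or {t k : ℕ}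
    (hP : Setoid.IsPartition 𝓑) (hB : B ∈ 𝓑) (hB' : B' ∈ 𝓑) (hne : B ≠ B') (hx : x ∈ B)
    (hfin : {y ∈ B' | ∃ w ∈ B, Γ.Adj y w}.Finite)
    (hk : {y ∈ B' | ∃ w ∈ B, Γ.Adj y w}.ncard = k)
    (ht : (Γ.neighborSet x ∩ B').ncard = 0 ∨ (Γ.neighborSet x ∩ B').ncard = t) :
    ((starTransform Γ 𝓑).neighborSet x ∩ B').ncard = 0 ∨
      ((starTransform Γ 𝓑).neighborSet x ∩ B').ncard = k - t := by
  by_cases hxB' : ∃ z ∈ B', Γ.Adj x z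
  · obtain ⟨z, hz, hxz⟩ := hxB'
    have hsub := neighborSet_inter_subset_attached (Γ := Γ) (B' := B') hx
    have hN : (Γ.neighborSet x ∩ B').ncard ≠ 0 :=
      ((Set.ncard_pos (hfin.subset hsub)).2 ⟨z, hxz, hz⟩).ne'
    right
    rw [ncard_starTransform_neighborSet_inter hP hB hB' hne hx ⟨z, hz, hxz⟩ hfin, hk,
      ht.resolve_left hN]
  · left
    rw [starTransform_neighborSet_inter_eq_empty hP hB hB' hne hx hxB', Set.ncard_empty]

theorem blockAdj_starTransform_iff (hP : Setoid.IsPartition 𝓑) (hB : B ∈ 𝓑) (hB' : B' ∈ 𝓑)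
    (hmeet : BlockAdj Γ B B' → ∀ x ∈ B,
      (∃ y ∈ B', Γ.Adj x y) → ∃ y ∈ B', (starTransform Γ 𝓑).Adj x y) :
    BlockAdj (starTransform Γ 𝓑) B B' ↔ BlockAdj Γ B B' := by
  constructor
  · rintro ⟨hne, x, hx, y, hy, hxy⟩
    exact ⟨hne, x, hx, ((starTransform_adj_iff hP hB hB' hne hx hy).1 hxy).2.1⟩
  · intro hBA
    obtain ⟨hne, x, hx, y, hy, hxy⟩ := id hBA
    exact ⟨hne, x, hx, hmeet hBA x hx ⟨y, hy, hxy⟩⟩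

theorem starTransform_starTransform (hP : Setoid.IsPartition 𝓑)
    (hintra : ∀ B ∈ 𝓑, ∀ x ∈ B, ∀ y ∈ B, ¬ Γ.Adj x y)
    (hmeet : ∀ B ∈ 𝓑, ∀ B' ∈ 𝓑, BlockAdj Γ B B' → ∀ x ∈ B,
      (∃ y ∈ B', Γ.Adj x y) → ∃ y ∈ B', (starTransform Γ 𝓑).Adj x y) :
    starTransform (starTransform Γ 𝓑) 𝓑 = Γ := by
  ext x y
  obtain ⟨B, ⟨hB, hx⟩, -⟩ := hP.2 x
  obtain ⟨B', ⟨hB', hy⟩, -⟩ := hP.2 y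
  obtain rfl | hne := eq_or_ne B B'
  · exact iff_of_false (not_starTransform_adj_of_mem hP hB hx hy) (hintra B hB x hx y hy)
  have meets_of_star {u v : V} {C C' : Set V} (hC : C ∈ 𝓑) (hC' : C' ∈ 𝓑) (hCC' : C ≠ C')
      (hu : u ∈ C) (hv : v ∈ C') (huv : (starTransform Γ 𝓑).Adj u v) : ∃ z ∈ C', Γ.Adj u z :=
    ((starTransform_adj_iff hP hC hC' hCC' hu hv).1 huv).2.1
  rw [starTransform_adj_iff hP hB hB' hne hx hy, starTransform_adj_iff hP hB hB' hne hx hy]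
  constructor
  · rintro ⟨hnxy, ⟨z, hz, hxz⟩, ⟨w, hw, hyw⟩⟩
    by_contra hxy
    exact hnxy ⟨hxy, meets_of_star hB hB' hne hx hz hxz, meets_of_star hB' hB hne.symm hy hw hyw⟩
  · intro hxy
    have hBA : BlockAdj Γ B B' := ⟨hne, x, hx, y, hy, hxy⟩
    exact ⟨fun h => h.1 hxy, hmeet B hB B' hB' hBA x hx ⟨y, hy, hxy⟩,
      hmeet B' hB' B hB hBA.symm y hy ⟨x, hx, hxy.symm⟩⟩

variable {G : Type*} [Group G] [MulAction G V]

theorem IsGSymmetric.adj_smul_iff (hsym : IsGSymmetric (G := G) Γ) (g : G) :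
    Γ.Adj (g • x) (g • y) ↔ Γ.Adj x y :=
  ⟨fun h => by simpa using hsym.1 g⁻¹ _ _ h, hsym.1 g x y⟩

theorem IsGPartition.smul_eq_of_smul_mem (hpart : IsGPartition G 𝓑) {C : Set V} {g : G}
    (hB : B ∈ 𝓑) (hC : C ∈ 𝓑) (hx : x ∈ B) (hgx : g • x ∈ C) : g • B = C :=
  Setoid.eq_of_mem_eqv_class hpart.1.2 (hpart.2 g B hB) (Set.smul_mem_smul_set hx) hC hgx

theorem starTransform_adj_smul (hsym : IsGSymmetric (G := G) Γ) (hpart : IsGPartition G 𝓑)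
    (g : G) (h : (starTransform Γ 𝓑).Adj x y) : (starTransform Γ 𝓑).Adj (g • x) (g • y) := by
  obtain ⟨hne, hxy, B, hB, B', hB', hBB', hx, hy, ⟨z, hz, hxz⟩, ⟨w, hw, hyw⟩⟩ := h
  exact ⟨(MulAction.injective g).ne hne, (hsym.adj_smul_iff g).not.2 hxy,
    g • B, hpart.2 g B hB, g • B', hpart.2 g B' hB', (MulAction.injective g).ne hBB',
    Set.smul_mem_smul_set hx, Set.smul_mem_smul_set hy,
    ⟨g • z, Set.smul_mem_smul_set hz, hsym.1 g _ _ hxz⟩,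
    ⟨g • w, Set.smul_mem_smul_set hw, hsym.1 g _ _ hyw⟩⟩

theorem isGSymmetric_starTransform (hsym : IsGSymmetric (G := G) Γ) (hpart : IsGPartition G 𝓑)
    (htrans : IsBlockNonEdgeTransitive G Γ 𝓑) : IsGSymmetric (G := G) (starTransform Γ 𝓑) := by
  refine ⟨fun g _ _ => starTransform_adj_smul hsym hpart g, hsym.2.1, ?_⟩
  intro x₁ y₁ x₂ y₂ h₁ h₂
  obtain ⟨-, -, B₁, hB₁, B₁', hB₁', -, hx₁, hy₁, ⟨z₁, hz₁, hxz₁⟩, -⟩ := id h₁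
  obtain ⟨-, -, B₂, hB₂, B₂', hB₂', hne, hx₂, hy₂, ⟨z₂, hz₂, hxz₂⟩, -⟩ := id h₂
  obtain ⟨h, rfl, rfl⟩ := hsym.2.2 x₁ z₁ x₂ z₂ hxz₁ hxz₂
  have hhy₁ : h • y₁ ∈ B₂' :=
    hpart.smul_eq_of_smul_mem hB₁' hB₂' hz₁ hz₂ ▸ Set.smul_mem_smul_set hy₁
  obtain ⟨hn₁, hxB₂', hyB₂⟩ := (starTransform_adj_iff hpart.1 hB₂ hB₂' hne hx₂ hhy₁).1
    (starTransform_adj_smul hsym hpart h h₁)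
  obtain ⟨hn₂, -, hy₂B₂⟩ := (starTransform_adj_iff hpart.1 hB₂ hB₂' hne hx₂ hy₂).1 h₂
  obtain ⟨g, -, -, hg, hgy⟩ := htrans B₂ hB₂ B₂' hB₂' ⟨hne, _, hx₂, _, hz₂, hxz₂⟩
    _ hx₂ _ hhy₁ _ hx₂ _ hy₂ hxB₂' hyB₂ hxB₂' hy₂B₂ hn₁ hn₂
  exact ⟨g * h, by rw [mul_smul, hg], by rw [mul_smul, hgy]⟩

end StarTransform

theorem stmt18_general {V G : Type*} [Group G] [MulAction G V]
    (Γ : SimpleGraph V) (𝓑 : Set (Set V))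
    (hsym : IsGSymmetric (G := G) Γ) (hpart : IsGPartition G 𝓑)
    (hintra : ∀ B ∈ 𝓑, ∀ x ∈ B, ∀ y ∈ B, ¬ Γ.Adj x y)
    (t k : ℕ) (htk : t < k)
    (ht : ∀ B ∈ 𝓑, ∀ B' ∈ 𝓑, BlockAdj Γ B B' → ∀ x ∈ B,
      (Γ.neighborSet x ∩ B').ncard = 0 ∨ (Γ.neighborSet x ∩ B').ncard = t)
    (hk : ∀ B ∈ 𝓑, ∀ B' ∈ 𝓑, BlockAdj Γ B B' →
      {x ∈ B | ∃ y ∈ B', Γ.Adj x y}.ncard = k)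
    -- G(B_i, B_j) is transitive on the non-edges between X_{ji} and X_{ij}
    (htransne : ∀ B ∈ 𝓑, ∀ B' ∈ 𝓑, BlockAdj Γ B B' →
      ∀ x ∈ B, ∀ y ∈ B', ∀ x' ∈ B, ∀ y' ∈ B',
        (∃ z ∈ B', Γ.Adj x z) → (∃ w ∈ B, Γ.Adj y w) →
        (∃ z ∈ B', Γ.Adj x' z) → (∃ w ∈ B, Γ.Adj y' w) →
        ¬ Γ.Adj x y → ¬ Γ.Adj x' y' →
        ∃ g : G, g • B = B ∧ g • B' = B' ∧ g • x = x' ∧ g • y = y') :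
    IsGSymmetric (G := G) (starTransform Γ 𝓑) ∧
    IsGPartition G 𝓑 ∧
    -- same quotient graph
    (∀ B ∈ 𝓑, ∀ B' ∈ 𝓑, (BlockAdj (starTransform Γ 𝓑) B B' ↔ BlockAdj Γ B B')) ∧
    -- k* = k : the same vertices of a block meet a fixed adjacent block
    (∀ B ∈ 𝓑, ∀ B' ∈ 𝓑, BlockAdj Γ B B' →
      {x ∈ B | ∃ y ∈ B', (starTransform Γ 𝓑).Adj x y}
        = {x ∈ B | ∃ y ∈ B', Γ.Adj x y}) ∧
    -- t* = k - t
    (∀ B ∈ 𝓑, ∀ B' ∈ 𝓑, BlockAdj Γ B B' → ∀ x ∈ B,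
      ((starTransform Γ 𝓑).neighborSet x ∩ B').ncard = 0 ∨
      ((starTransform Γ 𝓑).neighborSet x ∩ B').ncard = k - t) ∧
    -- (Γ*)* = Γ
    starTransform (starTransform Γ 𝓑) 𝓑 = Γ := by
  have hfin : ∀ B ∈ 𝓑, ∀ B' ∈ 𝓑, BlockAdj Γ B B' → {y ∈ B' | ∃ w ∈ B, Γ.Adj y w}.Finite :=
    fun B hB B' hB' hBA => Set.finite_of_ncard_pos (by rw [hk B' hB' B hB hBA.symm]; omega)
  have hmeet : ∀ B ∈ 𝓑, ∀ B' ∈ 𝓑, BlockAdj Γ B B' → ∀ x ∈ B,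
      (∃ y ∈ B', (starTransform Γ 𝓑).Adj x y) ↔ ∃ y ∈ B', Γ.Adj x y := by
    intro B hB B' hB' hBA x hx
    refine exists_starTransform_adj_iff hpart.1 hB hB' hBA.1 hx (hfin B hB B' hB' hBA) ?_
    rw [hk B' hB' B hB hBA.symm]
    rcases ht B hB B' hB' hBA x hx with h | h <;> omega
  refine ⟨isGSymmetric_starTransform hsym hpart htransne, hpart,
    fun B hB B' hB' => blockAdj_starTransform_iff hpart.1 hB hB'
      fun hBA x hx => (hmeet B hB B' hB' hBA x hx).2,
    fun B hB B' hB' hBA => Set.ext fun x => and_congr_right (hmeet B hB B' hB' hBA x),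
    fun B hB B' hB' hBA x hx => ncard_starTransform_neighborSet_inter_eq_zero_or hpart.1 hB hB'
      hBA.1 hx (hfin B hB B' hB' hBA) (hk B' hB' B hB hBA.symm) (ht B hB B' hB' hBA x hx),
    starTransform_starTransform hpart.1 hintra
      fun B hB B' hB' hBA x hx => (hmeet B hB B' hB' hBA x hx).2⟩

/-- the `*`-transform `Γ*` is `G`-symmetric, `𝓑` is a `G`-partition for `Γ*`
with the same quotient graph, the parameters satisfy `v* = v`, `b* = b`, `k* = k`,
`t* = k - t`, and `(Γ*)* = Γ`. -/
theorem stmt18 {V G : Type*} [Fintype V] [Group G] [MulAction G V]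
    (Γ : SimpleGraph V) (𝓑 : Set (Set V))
    (hsym : IsGSymmetric (G := G) Γ) (hpart : IsGPartition G 𝓑)
    (hintra : ∀ B ∈ 𝓑, ∀ x ∈ B, ∀ y ∈ B, ¬ Γ.Adj x y)
    (t k : ℕ) (htk : t < k) (hk2 : 2 ≤ k) (ht1 : 1 ≤ t)
    (ht : ∀ B ∈ 𝓑, ∀ B' ∈ 𝓑, BlockAdj Γ B B' → ∀ x ∈ B,
      (Γ.neighborSet x ∩ B').ncard = 0 ∨ (Γ.neighborSet x ∩ B').ncard = t)
    (hk : ∀ B ∈ 𝓑, ∀ B' ∈ 𝓑, BlockAdj Γ B B' →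
      {x ∈ B | ∃ y ∈ B', Γ.Adj x y}.ncard = k)
    -- G(B_i, B_j) is transitive on the non-edges between X_{ji} and X_{ij}
    (htransne : ∀ B ∈ 𝓑, ∀ B' ∈ 𝓑, BlockAdj Γ B B' →
      ∀ x ∈ B, ∀ y ∈ B', ∀ x' ∈ B, ∀ y' ∈ B',
        (∃ z ∈ B', Γ.Adj x z) → (∃ w ∈ B, Γ.Adj y w) →
        (∃ z ∈ B', Γ.Adj x' z) → (∃ w ∈ B, Γ.Adj y' w) →
        ¬ Γ.Adj x y → ¬ Γ.Adj x' y' →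
        ∃ g : G, g • B = B ∧ g • B' = B' ∧ g • x = x' ∧ g • y = y') :
    IsGSymmetric (G := G) (starTransform Γ 𝓑) ∧
    IsGPartition G 𝓑 ∧
    -- same quotient graph
    (∀ B ∈ 𝓑, ∀ B' ∈ 𝓑, (BlockAdj (starTransform Γ 𝓑) B B' ↔ BlockAdj Γ B B')) ∧
    -- k* = k : the same vertices of a block meet a fixed adjacent block
    (∀ B ∈ 𝓑, ∀ B' ∈ 𝓑, BlockAdj Γ B B' →
      {x ∈ B | ∃ y ∈ B', (starTransform Γ 𝓑).Adj x y}
        = {x ∈ B | ∃ y ∈ B', Γ.Adj x y}) ∧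
    -- t* = k - t
    (∀ B ∈ 𝓑, ∀ B' ∈ 𝓑, BlockAdj Γ B B' → ∀ x ∈ B,
      ((starTransform Γ 𝓑).neighborSet x ∩ B').ncard = 0 ∨
      ((starTransform Γ 𝓑).neighborSet x ∩ B').ncard = k - t) ∧
    -- (Γ*)* = Γ
    starTransform (starTransform Γ 𝓑) 𝓑 = Γ :=
  stmt18_general Γ 𝓑 hsym hpart hintra t k htk ht hk htransne
end
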